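/- arXiv:1501.05496 — 7 statements merged into one kernel-verified Lean document; each statement's English description precedes it below -/
import Mathlib

section
/- Let Λ ⊂ ℝ² be a lattice, let {φ_λ}_{λ∈Λ} be a tight (Parseval) Gabor frame with generating function φ ∈ L²(ℝ), and let Ω ⊂ Λ be a finite set. Let M be the Ω×Ω Hermitian matrix with entries M(ν₁,ν₂) = ⟨φ_{ν₂}, φ_{ν₁}⟩, and let λ₁,…,λ_{|Ω|} be its eigenvalues. Then Σ_i λ_i(1 − λ_i) = Σ_{ν₁∈Λ∖Ω} Σ_{ν₂∈Ω} |⟨φ_{ν₂}, φ_{ν₁}⟩|². (The eigenvalues of M are the nonzero eigenvalues of the Gabor localization operator G_{φ,Ω}, so the left-hand side is the projection functional PF(G_{φ,Ω}).) -/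
open MeasureTheory Filter Topology Pointwise

noncomputable section

/-- Euclidean dot product on ℝ². -/
def dot2 (v w : ℝ × ℝ) : ℝ := v.1 * w.1 + v.2 * w.2

/-- Euclidean norm on ℝ². -/
def enorm2 (v : ℝ × ℝ) : ℝ := Real.sqrt (v.1 ^ 2 + v.2 ^ 2)

/-- Time–frequency shift: for `l = (q, p)`, `(tfshift φ l) x = e^{2πipx} φ(x − q)`. -/
def tfshift (φ : ℝ → ℂ) (l : ℝ × ℝ) : ℝ → ℂ :=
  fun x => Complex.exp (2 * Real.pi * Complex.I * l.2 * x) * φ (x - l.1)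

/-- The L² inner product `⟨f, g⟩ = ∫ f ḡ`, linear in the first argument. -/
def gip (f g : ℝ → ℂ) : ℂ := ∫ x : ℝ, f x * (starRingEnd ℂ) (g x)

/-- A lattice in ℝ²: all integer combinations of two linearly independent vectors. -/
def IsLattice2 (Λ : Set (ℝ × ℝ)) : Prop :=
  ∃ v₁ v₂ : ℝ × ℝ, v₁.1 * v₂.2 - v₁.2 * v₂.1 ≠ 0 ∧
    Λ = {x | ∃ a b : ℤ, x = (a : ℝ) • v₁ + (b : ℝ) • v₂}

/-- `{φ_λ}_{λ∈Λ}` is a tight (Parseval) Gabor frame: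
`‖f‖² = Σ_{λ∈Λ} |⟨f,φ_λ⟩|²` for every `f ∈ L²(ℝ)`. -/
def IsParsevalGaborFrame (Λ : Set (ℝ × ℝ)) (φ : ℝ → ℂ) : Prop :=
  MemLp φ 2 volume ∧
  ∀ f : ℝ → ℂ, MemLp f 2 volume →
    ∫ x : ℝ, ‖f x‖ ^ 2 = ∑' lam : Λ, ‖gip f (tfshift φ ↑lam)‖ ^ 2

/-- Condition Φ: `Σ_{λ∈Λ} |⟨φ,φ_λ⟩|²·|λ| < ∞`. -/
def ConditionPhi (Λ : Set (ℝ × ℝ)) (φ : ℝ → ℂ) : Prop :=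
  Summable (fun lam : Λ => ‖gip φ (tfshift φ ↑lam)‖ ^ 2 * enorm2 ↑lam)

/-- `nv` is the unit normal of the segment from `p` to `q` pointing out of `Ω`:
it is unit, orthogonal to the segment, and near interior points of the segment
the set `Ω` lies on the side where `(x − z)·nv ≤ 0`. -/
def IsOutwardUnitNormal (Ω : Set (ℝ × ℝ)) (p q nv : ℝ × ℝ) : Prop :=
  enorm2 nv = 1 ∧ dot2 nv (q - p) = 0 ∧
    ∀ z ∈ openSegment ℝ p q, ∃ ε > 0, ∀ x ∈ Ω, enorm2 (x - z) < ε → dot2 (x - z) nv ≤ 0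

/-- The half-plane sum `Σ_{λ∈Λ, λ·nv ≥ 0} (λ·nv)·c(λ)`;
for `λ·nv ≥ 0`, `λ·nv` is the distance from `λ` to the line `{w : w·nv = 0}`. -/
def halfPlaneSum (Λ : Set (ℝ × ℝ)) (c : ℝ × ℝ → ℝ) (nv : ℝ × ℝ) : ℝ :=
  ∑' lam : Λ, if 0 ≤ dot2 (↑lam) nv then dot2 (↑lam) nv * c ↑lam else 0

/-! By the spectral theorem `Σ λᵢ(1 − λᵢ) = tr M − tr M²`, a sum over the columns `ν₂ ∈ Ω` of
`M ν₂ ν₂ − Σ_{ν₁ ∈ Ω} |M ν₁ ν₂|²`. The diagonal entry is `‖φ_{ν₂}‖²`, which the Parseval identity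
expands as `Σ_{ν₁ ∈ Λ} |⟨φ_{ν₂}, φ_{ν₁}⟩|²`; removing the terms with `ν₁ ∈ Ω` leaves exactly the
sum over `Λ ∖ Ω`. -/

namespace Matrix.IsHermitian

variable {n 𝕜 : Type*} [Fintype n] [RCLike 𝕜] {A : Matrix n n 𝕜}

theorem trace_mul_self_eq_sum_norm_sq (hA : A.IsHermitian) :
    (A * A).trace = ∑ j, ∑ i, ((‖A i j‖ ^ 2 : ℝ) : 𝕜) := by
  simp only [trace, diag_apply, mul_apply]
  refine Finset.sum_congr rfl fun j _ => Finset.sum_congr rfl fun i _ => ?_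
  rw [← hA.apply j i, RCLike.star_def, RCLike.conj_mul, RCLike.ofReal_pow]

variable [DecidableEq n]

theorem trace_mul_self_eq_sum_eigenvalues_sq (hA : A.IsHermitian) :
    (A * A).trace = ∑ i, ((hA.eigenvalues i ^ 2 : ℝ) : 𝕜) := by
  conv_lhs => rw [hA.spectral_theorem, ← map_mul, Unitary.conjStarAlgAut_apply, trace_mul_cycle,
    Unitary.coe_star_mul_self, one_mul, diagonal_mul_diagonal, trace_diagonal]
  simp [sq]

theorem sum_eigenvalues_sq (hA : A.IsHermitian) :
    ∑ i, hA.eigenvalues i ^ 2 = ∑ j, ∑ i, ‖A i j‖ ^ 2 := by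
  have h := hA.trace_mul_self_eq_sum_eigenvalues_sq.symm.trans hA.trace_mul_self_eq_sum_norm_sq
  exact_mod_cast h

theorem sum_eigenvalues (hA : A.IsHermitian) :
    ∑ i, hA.eigenvalues i = ∑ j, RCLike.re (A j j) := by
  simpa [trace] using congrArg RCLike.re hA.trace_eq_sum_eigenvalues.symm

theorem sum_eigenvalues_mul_one_sub (hA : A.IsHermitian) :
    ∑ i, hA.eigenvalues i * (1 - hA.eigenvalues i) =
      ∑ j, (RCLike.re (A j j) - ∑ i, ‖A i j‖ ^ 2) := by
  simp only [mul_one_sub, ← sq, Finset.sum_sub_distrib, hA.sum_eigenvalues, hA.sum_eigenvalues_sq]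

end Matrix.IsHermitian

section SubtypeSum

variable {α E : Type*} [AddCommGroup E] [UniformSpace E] [IsUniformAddGroup E] [CompleteSpace E]
  {f : α → E} {s : Set α}

theorem Summable.subtype_mono (hf : Summable fun x : s => f x) {t : Set α} (hts : t ⊆ s) :
    Summable fun x : t => f x :=
  hf.comp_injective (Set.inclusion_injective hts)

theorem Summable.tsum_subtype_eq_sum_add_tsum_sdiff [T2Space E] (hf : Summable fun x : s => f x)
    {t : Finset α} (hts : ↑t ⊆ s) :
    ∑' x : s, f x = ∑ x ∈ t, f x + ∑' x : ↥(s \ t), f x := by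
  rw [tsum_congr_set_coe f (Set.union_sdiff_cancel hts).symm,
    (t.summable f).tsum_union_disjoint Set.disjoint_sdiff_right (hf.subtype_mono Set.sdiff_subset),
    Finset.tsum_subtype']

end SubtypeSum

theorem norm_tfshift_apply (φ : ℝ → ℂ) (l : ℝ × ℝ) (x : ℝ) :
    ‖tfshift φ l x‖ = ‖φ (x - l.1)‖ := by
  simp [tfshift, Complex.norm_exp]

theorem MemLp.tfshift {φ : ℝ → ℂ} (hφ : MemLp φ 2 volume) (l : ℝ × ℝ) :
    MemLp (tfshift φ l) 2 volume := by
  have hshift := hφ.comp_measurePreserving (measurePreserving_sub_right volume l.1)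
  refine hshift.congr_norm ?_ (ae_of_all _ fun x => (norm_tfshift_apply φ l x).symm)
  exact ((by fun_prop : Continuous fun x : ℝ => Complex.exp (2 * Real.pi * Complex.I * l.2 * x))
    |>.aestronglyMeasurable).mul hshift.aestronglyMeasurable

theorem gip_self (f : ℝ → ℂ) : gip f f = ((∫ x, ‖f x‖ ^ 2 : ℝ) : ℂ) := by
  simp only [gip, Complex.mul_conj', ← Complex.ofReal_pow]
  exact integral_ofReal

theorem gip_eq_zero_of_ae_eq_zero {f : ℝ → ℂ} (hf : f =ᵐ[volume] 0) (g : ℝ → ℂ) :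
    gip f g = 0 := by
  rw [gip, integral_eq_zero_of_ae]
  filter_upwards [hf] with x hx
  simp [hx]

namespace IsParsevalGaborFrame

variable {Λ : Set (ℝ × ℝ)} {φ : ℝ → ℂ} {f : ℝ → ℂ}

-- A divergent sum would have `tsum` value `0`, forcing `f = 0` a.e. and hence all terms to vanish.
theorem summable_norm_sq_gip (hframe : IsParsevalGaborFrame Λ φ) (hf : MemLp f 2 volume) :
    Summable fun l : Λ => ‖gip f (tfshift φ l)‖ ^ 2 := by
  by_contra hdiv
  have hzero : ∫ x, ‖f x‖ ^ 2 = 0 := by rw [hframe.2 f hf, tsum_eq_zero_of_not_summable hdiv]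
  have hf0 : f =ᵐ[volume] 0 := by
    have hsq := (integral_eq_zero_iff_of_nonneg (fun x => by positivity)
      (hf.integrable_norm_pow two_ne_zero)).mp hzero
    filter_upwards [hsq] with x hx
    simpa using hx
  exact hdiv (by simp [gip_eq_zero_of_ae_eq_zero hf0])

theorem integral_norm_sq_sub_sum_eq_tsum_sdiff (hframe : IsParsevalGaborFrame Λ φ)
    (hf : MemLp f 2 volume) {Ω : Finset (ℝ × ℝ)} (hΩ : ↑Ω ⊆ Λ) :
    (∫ x, ‖f x‖ ^ 2) - ∑ ν ∈ Ω, ‖gip f (tfshift φ ν)‖ ^ 2 =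
      ∑' ν : ↥(Λ \ ↑Ω), ‖gip f (tfshift φ ν)‖ ^ 2 := by
  rw [hframe.2 f hf, (hframe.summable_norm_sq_gip hf).tsum_subtype_eq_sum_add_tsum_sdiff
    (f := fun ν => ‖gip f (tfshift φ ν)‖ ^ 2) hΩ, add_sub_cancel_left]

end IsParsevalGaborFrame

theorem projection_functional_eq_offdiagonal_sum_general
    (Λ : Set (ℝ × ℝ))
    (φ : ℝ → ℂ) (hframe : IsParsevalGaborFrame Λ φ)
    (Ω : Finset (ℝ × ℝ)) (hΩ : ↑Ω ⊆ Λ)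
    (M : Matrix {x // x ∈ Ω} {x // x ∈ Ω} ℂ)
    (hMdef : ∀ ν₁ ν₂ : {x // x ∈ Ω},
      M ν₁ ν₂ = gip (tfshift φ ↑ν₂) (tfshift φ ↑ν₁))
    (hM : M.IsHermitian) :
    ∑ i : {x // x ∈ Ω}, hM.eigenvalues i * (1 - hM.eigenvalues i) =
      ∑' ν₁ : ↥(Λ \ ↑Ω), ∑ ν₂ ∈ Ω, ‖gip (tfshift φ ν₂) (tfshift φ ↑ν₁)‖ ^ 2 := by
  have hcolumn (ν₂ : {x // x ∈ Ω}) :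
      RCLike.re (M ν₂ ν₂) - ∑ ν₁, ‖M ν₁ ν₂‖ ^ 2 =
        ∑' ν₁ : ↥(Λ \ ↑Ω), ‖gip (tfshift φ ν₂) (tfshift φ ν₁)‖ ^ 2 := by
    simp only [hMdef, gip_self, RCLike.re_to_complex, Complex.ofReal_re]
    rw [Finset.sum_coe_sort Ω fun ν₁ => ‖gip (tfshift φ ν₂) (tfshift φ ν₁)‖ ^ 2]
    exact hframe.integral_norm_sq_sub_sum_eq_tsum_sdiff (MemLp.tfshift hframe.1 _) hΩ
  have hsummable (ν₂ : ℝ × ℝ) :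
      Summable fun ν₁ : ↥(Λ \ ↑Ω) => ‖gip (tfshift φ ν₂) (tfshift φ ν₁)‖ ^ 2 :=
    (hframe.summable_norm_sq_gip (MemLp.tfshift hframe.1 ν₂)).subtype_mono
      (f := fun ν₁ => ‖gip (tfshift φ ν₂) (tfshift φ ν₁)‖ ^ 2) Set.sdiff_subset
  rw [hM.sum_eigenvalues_mul_one_sub, Finset.sum_congr rfl fun ν₂ _ => hcolumn ν₂,
    Summable.tsum_finsetSum fun ν₂ _ => hsummable ν₂]
  exact Finset.sum_coe_sort Ω fun ν₂ => ∑' ν₁ : ↥(Λ \ ↑Ω), ‖gip (tfshift φ ν₂) (tfshift φ ν₁)‖ ^ 2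

/-- the projection functional of the Gabor localization operator
`G_{φ,Ω}` — i.e. `Σ_i λ_i(1−λ_i)` over the eigenvalues of the Gram matrix of the
frame vectors indexed by the finite set `Ω ⊂ Λ` — equals
`Σ_{ν₁∈Λ∖Ω} Σ_{ν₂∈Ω} |⟨φ_{ν₂},φ_{ν₁}⟩|²`. -/
theorem projection_functional_eq_offdiagonal_sum
    (Λ : Set (ℝ × ℝ)) (hΛ : IsLattice2 Λ)
    (φ : ℝ → ℂ) (hframe : IsParsevalGaborFrame Λ φ)
    (Ω : Finset (ℝ × ℝ)) (hΩ : ↑Ω ⊆ Λ)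
    (M : Matrix {x // x ∈ Ω} {x // x ∈ Ω} ℂ)
    (hMdef : ∀ ν₁ ν₂ : {x // x ∈ Ω},
      M ν₁ ν₂ = gip (tfshift φ ↑ν₂) (tfshift φ ↑ν₁))
    (hM : M.IsHermitian) :
    ∑ i : {x // x ∈ Ω}, hM.eigenvalues i * (1 - hM.eigenvalues i) =
      ∑' ν₁ : ↥(Λ \ ↑Ω), ∑ ν₂ ∈ Ω, ‖gip (tfshift φ ν₂) (tfshift φ ↑ν₁)‖ ^ 2 :=
  projection_functional_eq_offdiagonal_sum_general Λ φ hframe Ω hΩ M hMdef hM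
end
end

section
/- Let m,n be relatively prime integers with n ≥ 2, 0 ≤ m ≤ n, and let t ∈ {1,2,…,n−1}. Define R_t : {0,1,…,n−1} → ℤ by R_t(s) = ⌊(m/n)(t+s)+1⌋ − ⌊(m/n)s⌋ for s ∈ {0,…,n−t−1}, and R_t(s) = m + ⌊(m/n)(s−(n−t))+1⌋ − ⌊(m/n)s⌋ for s ∈ {n−t,…,n−1}. Then R_t takes exactly the two distinct values ⌊(m/n)t+1⌋ and ⌊(m/n)t+1⌋+1; the value ⌊(m/n)t+1⌋ is taken for exactly n·(⌊(m/n)t+1⌋ − (m/n)t) values of s, and the value ⌊(m/n)t+1⌋+1 is taken for the remaining n − n·(⌊(m/n)t+1⌋ − (m/n)t) values of s. -/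
private lemma add_ediv_cases (A B n : ℤ) (hn : 0 < n) :
    (A + B) / n = A / n + B / n + (if A % n + B % n < n then 0 else 1) := by
  have hne : n ≠ 0 := hn.ne'
  have h : A + B = (A % n + B % n) + (A / n + B / n) * n := by
    have e1 := Int.mul_ediv_add_emod A n
    have e2 := Int.mul_ediv_add_emod B n
    linear_combination -e1 - e2
  rw [h, Int.add_mul_ediv_right _ _ hne]
  have m1 := Int.emod_nonneg A hne
  have m2 := Int.emod_nonneg B hne
  have m1' := Int.emod_lt_of_pos A hn
  have m2' := Int.emod_lt_of_pos B hn
  by_cases hlt : A % n + B % n < n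
  · rw [if_pos hlt, Int.ediv_eq_zero_of_lt (by omega) hlt]; ring
  · rw [if_neg hlt]
    have h2 : A % n + B % n = (A % n + B % n - n) + 1 * n := by ring
    rw [h2, Int.add_mul_ediv_right _ _ hne,
      Int.ediv_eq_zero_of_lt (by omega) (by omega)]
    ring

/-- lattice slopes of rational lines: the function `R_t` takes
exactly the two distinct values `⌊(m/n)t+1⌋` and `⌊(m/n)t+1⌋+1`; the first is
taken for exactly `n·(⌊(m/n)t+1⌋ − (m/n)t)` values of `s`, and the second for
the remaining `n − n·(⌊(m/n)t+1⌋ − (m/n)t)` values of `s`. -/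
theorem lattice_slopes
    (m n t : ℕ) (hn : 2 ≤ n) (hm : m ≤ n) (hcop : Nat.Coprime m n)
    (ht1 : 1 ≤ t) (ht2 : t ≤ n - 1)
    (Rt : ℕ → ℤ)
    (hRt1 : ∀ s : ℕ, s + t + 1 ≤ n →
      Rt s = ⌊(m : ℚ) * ((t : ℚ) + (s : ℚ)) / n + 1⌋ - ⌊(m : ℚ) * (s : ℚ) / n⌋)
    (hRt2 : ∀ s : ℕ, s < n → n ≤ s + t →
      Rt s = m + ⌊(m : ℚ) * ((s : ℚ) - ((n : ℚ) - (t : ℚ))) / n + 1⌋ -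
        ⌊(m : ℚ) * (s : ℚ) / n⌋) :
    (∀ s < n, Rt s = ⌊(m : ℚ) * (t : ℚ) / n + 1⌋ ∨
      Rt s = ⌊(m : ℚ) * (t : ℚ) / n + 1⌋ + 1) ∧
    (∃ s < n, Rt s = ⌊(m : ℚ) * (t : ℚ) / n + 1⌋) ∧
    (∃ s < n, Rt s = ⌊(m : ℚ) * (t : ℚ) / n + 1⌋ + 1) ∧
    (((Finset.range n).filter fun s => Rt s = ⌊(m : ℚ) * (t : ℚ) / n + 1⌋).card : ℤ) =
      n * ⌊(m : ℚ) * (t : ℚ) / n + 1⌋ - m * t ∧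
    (((Finset.range n).filter fun s =>
        Rt s = ⌊(m : ℚ) * (t : ℚ) / n + 1⌋ + 1).card : ℤ) =
      n - (n * ⌊(m : ℚ) * (t : ℚ) / n + 1⌋ - m * t) := by
  have hn0 : 0 < n := by omega
  have hnz : (n : ℤ) ≠ 0 := by exact_mod_cast hn0.ne'
  have hnpos : (0 : ℤ) < n := by exact_mod_cast hn0
  -- the target value
  have hq : ⌊(m : ℚ) * (t : ℚ) / n + 1⌋ = ((m * t : ℕ) : ℤ) / (n : ℤ) + 1 := by
    rw [Int.floor_add_one]
    have : (m : ℚ) * (t : ℚ) / n = (((m * t : ℕ) : ℤ) : ℚ) / (n : ℕ) := by push_cast; ring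
    rw [this, Rat.floor_intCast_div_natCast]
  -- uniform formula for Rt
  have hR : ∀ s : ℕ, s < n →
      Rt s = ((m : ℤ) * (s + t)) / n - ((m : ℤ) * s) / n + 1 := by
    intro s hs
    have hfloor_s : ⌊(m : ℚ) * (s : ℚ) / n⌋ = ((m : ℤ) * s) / n := by
      have : (m : ℚ) * (s : ℚ) / n = (((m : ℤ) * s : ℤ) : ℚ) / (n : ℕ) := by push_cast; ring
      rw [this, Rat.floor_intCast_div_natCast]
    by_cases h : s + t + 1 ≤ n
    · rw [hRt1 s h, hfloor_s, Int.floor_add_one]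
      have : (m : ℚ) * ((t : ℚ) + (s : ℚ)) / n = (((m : ℤ) * (s + t) : ℤ) : ℚ) / (n : ℕ) := by
        push_cast; ring
      rw [this, Rat.floor_intCast_div_natCast]; ring
    · have h2 : n ≤ s + t := by omega
      rw [hRt2 s hs h2, hfloor_s, Int.floor_add_one]
      have hcast : (m : ℚ) * ((s : ℚ) - ((n : ℚ) - (t : ℚ))) / n
          = (((m : ℤ) * ((s : ℤ) + t - n) : ℤ) : ℚ) / (n : ℕ) := by push_cast; ring
      rw [hcast, Rat.floor_intCast_div_natCast]
      have : (m : ℤ) * ((s : ℤ) + t - n) / n + (m : ℤ)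
          = ((m : ℤ) * ((s : ℤ) + t - n) + (m : ℤ) * n) / n := by
        rw [Int.add_mul_ediv_right _ _ hnz]
      have h3 : (m : ℤ) * ((s : ℤ) + t - n) + (m : ℤ) * n = (m : ℤ) * (s + t) := by ring
      rw [h3] at this
      push_cast
      omega
  -- dichotomy with explicit criterion
  have hcrit : ∀ s : ℕ, s < n →
      (Rt s = ((m * t : ℕ) : ℤ) / n + 1 ∧ ((m : ℤ) * s) % n + ((m : ℤ) * t) % n < n) ∨
      (Rt s = ((m * t : ℕ) : ℤ) / n + 2 ∧ ¬ (((m : ℤ) * s) % n + ((m : ℤ) * t) % n < n)) := by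
    intro s hs
    rw [hR s hs]
    have hsum : (m : ℤ) * (s + t) = (m : ℤ) * s + (m : ℤ) * t := by ring
    rw [hsum, add_ediv_cases _ _ _ hnpos]
    have hmt : ((m * t : ℕ) : ℤ) = (m : ℤ) * t := by push_cast; ring
    rw [hmt]
    by_cases hlt : (m : ℤ) * s % n + (m : ℤ) * t % n < n
    · left; rw [if_pos hlt]; exact ⟨by ring, hlt⟩
    · right; rw [if_neg hlt]; exact ⟨by ring, hlt⟩
  -- residue r of m*t mod n
  set r : ℤ := ((m : ℤ) * t) % n with hr
  have hr0 : 0 ≤ r := Int.emod_nonneg _ hnz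
  have hrn : r < n := Int.emod_lt_of_pos _ hnpos
  have hrne : r ≠ 0 := by
    intro h
    have : (n : ℤ) ∣ (m : ℤ) * t := Int.dvd_of_emod_eq_zero h
    have : (n : ℕ) ∣ m * t := by exact_mod_cast this
    have hdvd : n ∣ t := Nat.Coprime.dvd_of_dvd_mul_left (Nat.coprime_comm.mp hcop) this
    have := Nat.le_of_dvd (by omega) hdvd
    omega
  -- natural-number residue
  haveI : NeZero n := ⟨by omega⟩
  set rn : ℕ := m * t % n with hrn
  have hr_rn : r = (rn : ℤ) := by
    rw [hr, hrn]; push_cast; rfl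
  have hrn1 : 1 ≤ rn := by
    rcases Nat.eq_zero_or_pos rn with h | h
    · exact absurd (by rw [hr_rn, h]; rfl) hrne
    · exact h
  have hrnn : rn < n := Nat.mod_lt _ hn0
  -- nat criterion
  have hcrit' : ∀ s : ℕ, s < n →
      (Rt s = ((m * t : ℕ) : ℤ) / n + 1 ↔ m * s % n < n - rn) := by
    intro s hs
    have hms : ((m : ℤ) * s) % n = ((m * s % n : ℕ) : ℤ) := by push_cast; rfl
    have hmt : ((m : ℤ) * t) % n = (rn : ℤ) := by rw [← hr_rn, hr]
    rcases hcrit s hs with ⟨h1, h2⟩ | ⟨h1, h2⟩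
    · rw [hms, hr_rn] at h2
      have h2' : m * s % n + rn < n := by exact_mod_cast h2
      exact ⟨fun _ => by omega, fun _ => h1⟩
    · rw [hms, hr_rn] at h2
      constructor
      · intro hh; rw [h1] at hh; omega
      · intro hh
        have h3 : m * s % n + rn < n := by omega
        exact absurd (by exact_mod_cast h3 : ((m * s % n : ℕ) : ℤ) + rn < n) h2
  -- counting lemma : number of s < n with m*s % n < c is c (for c ≤ n)
  have hcount : ∀ c : ℕ, c ≤ n →
      ((Finset.range n).filter fun s => m * s % n < c).card = c := by
    intro c hc
    have hb : ((Finset.range n).filter fun s => m * s % n < c).card = (Finset.range c).card := by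
      apply Finset.card_bij (fun s (_ : s ∈ (Finset.range n).filter fun s => m * s % n < c) => m * s % n)
      · intro a ha
        simp only [Finset.mem_filter, Finset.mem_range] at ha ⊢
        exact ha.2
      · intro a ha b hb hab
        simp only [Finset.mem_filter, Finset.mem_range] at ha hb
        have h1 : m * a ≡ m * b [MOD n] := hab
        have h2 : a ≡ b [MOD n] := h1.cancel_left_of_coprime hcop.symm
        have := h2.eq_of_lt_of_lt ha.1 hb.1
        exact this
      · intro x hx
        simp only [Finset.mem_range] at hx
        set u : (ZMod n)ˣ := ZMod.unitOfCoprime m hcop with hu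
        refine ⟨(((u⁻¹ : (ZMod n)ˣ) : ZMod n) * (x : ZMod n)).val, ?_, ?_⟩
        · simp only [Finset.mem_filter, Finset.mem_range]
          constructor
          · exact ZMod.val_lt _
          · have key : ((m * (((u⁻¹ : (ZMod n)ˣ) : ZMod n) * (x : ZMod n)).val : ℕ) : ZMod n)
                = (x : ZMod n) := by
              push_cast
              rw [ZMod.natCast_val, ZMod.cast_id]
              have hm : ((m : ZMod n)) = (u : ZMod n) := (ZMod.coe_unitOfCoprime m hcop).symm
              rw [hm, ← mul_assoc]
              norm_cast
              rw [mul_inv_cancel]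
              simp
            have := congrArg ZMod.val key
            rw [ZMod.val_natCast, ZMod.val_natCast_of_lt (lt_of_lt_of_le hx hc)] at this
            omega
        · have key : ((m * (((u⁻¹ : (ZMod n)ˣ) : ZMod n) * (x : ZMod n)).val : ℕ) : ZMod n)
              = (x : ZMod n) := by
            push_cast
            rw [ZMod.natCast_val, ZMod.cast_id]
            have hm : ((m : ZMod n)) = (u : ZMod n) := (ZMod.coe_unitOfCoprime m hcop).symm
            rw [hm, ← mul_assoc]
            norm_cast
            rw [mul_inv_cancel]
            simp
          have := congrArg ZMod.val key
          rwa [ZMod.val_natCast, ZMod.val_natCast_of_lt (lt_of_lt_of_le hx hc)] at this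
    rw [hb, Finset.card_range]
  -- identify the two filters
  have hfilt1 : ((Finset.range n).filter fun s => Rt s = ⌊(m : ℚ) * (t : ℚ) / n + 1⌋)
      = (Finset.range n).filter fun s => m * s % n < n - rn := by
    apply Finset.filter_congr
    intro s hs
    simp only [Finset.mem_range] at hs
    rw [hq]
    exact_mod_cast (hcrit' s hs)
  have hcard1 : ((Finset.range n).filter fun s =>
      Rt s = ⌊(m : ℚ) * (t : ℚ) / n + 1⌋).card = n - rn := by
    rw [hfilt1]; exact hcount (n - rn) (by omega)
  have hfilt2 : ((Finset.range n).filter fun s => Rt s = ⌊(m : ℚ) * (t : ℚ) / n + 1⌋ + 1)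
      = (Finset.range n).filter fun s => ¬ (m * s % n < n - rn) := by
    apply Finset.filter_congr
    intro s hs
    simp only [Finset.mem_range] at hs
    constructor
    · intro hh hlt
      have := (hcrit' s hs).mpr hlt
      rw [hq] at hh
      omega
    · intro hh
      rcases hcrit s hs with ⟨h1, _⟩ | ⟨h1, _⟩
      · exact absurd ((hcrit' s hs).mp h1) hh
      · rw [hq, h1]; ring
  have hcard2 : ((Finset.range n).filter fun s =>
      Rt s = ⌊(m : ℚ) * (t : ℚ) / n + 1⌋ + 1).card = rn := by
    rw [hfilt2]
    have := Finset.card_filter_add_card_filter_not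
      (s := Finset.range n) (p := fun s => m * s % n < n - rn)
    have h1 := hcount (n - rn) (by omega)
    rw [Finset.card_range] at this
    omega
  -- value of n * q - m * t
  have hqval : (n : ℤ) * ⌊(m : ℚ) * (t : ℚ) / n + 1⌋ - m * t = (n : ℤ) - rn := by
    rw [hq]
    have e := Int.mul_ediv_add_emod ((m * t : ℕ) : ℤ) n
    have hmod : ((m * t : ℕ) : ℤ) % n = (rn : ℤ) := by rw [← hr_rn, hr]; push_cast; ring_nf
    rw [hmod] at e
    push_cast
    push_cast at e
    linear_combination e
  refine ⟨?_, ?_, ?_, ?_, ?_⟩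
  · intro s hs
    rw [hq]
    rcases hcrit s hs with ⟨h1, _⟩ | ⟨h1, _⟩
    · left; exact h1
    · right; rw [h1]; ring
  · have : 0 < ((Finset.range n).filter fun s =>
        Rt s = ⌊(m : ℚ) * (t : ℚ) / n + 1⌋).card := by rw [hcard1]; omega
    obtain ⟨s, hsmem⟩ := Finset.card_pos.mp this
    simp only [Finset.mem_filter, Finset.mem_range] at hsmem
    exact ⟨s, hsmem.1, hsmem.2⟩
  · have : 0 < ((Finset.range n).filter fun s =>
        Rt s = ⌊(m : ℚ) * (t : ℚ) / n + 1⌋ + 1).card := by rw [hcard2]; omega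
    obtain ⟨s, hsmem⟩ := Finset.card_pos.mp this
    simp only [Finset.mem_filter, Finset.mem_range] at hsmem
    exact ⟨s, hsmem.1, hsmem.2⟩
  · rw [hcard1, hqval]
    push_cast [Nat.cast_sub (le_of_lt hrnn)]
    ring
  · rw [hcard2, hqval]
    push_cast
    ring
end

section
/- Let Ω ⊂ ℝ² be a bounded set, let F : ℤ² → [0,∞) satisfy Σ_{λ∈ℤ²} F(λ)|λ| < ∞, and let δ > 0. For each positive integer R define K_R(ν₁,ν₂) = (1/R)·χ_{Ω^c}(ν₁)·F(R(ν₁−ν₂))·χ_Ω(ν₂) for ν₁,ν₂ ∈ (1/R)ℤ². Suppose that for all sufficiently large R, G_R : (1/R)ℤ² × (1/R)ℤ² → [0,∞) satisfies 0 ≤ G_R(ν₁,ν₂) ≤ K_R(ν₁,ν₂) for all ν₁,ν₂, and G_R(ν₁,ν₂) = 0 whenever |ν₁−ν₂| < δ. Then lim_{R→∞} Σ_{ν₁,ν₂ ∈ (1/R)ℤ²} G_R(ν₁,ν₂) = 0. -/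
open Filter Topology

noncomputable section

/-- The point of `(1/R)ℤ²` indexed by the integer pair `v`. -/
def toE (R : ℕ) (v : ℤ × ℤ) : ℝ × ℝ := ((v.1 : ℝ) / R, (v.2 : ℝ) / R)

lemma enorm2_nonneg' (v : ℝ × ℝ) : 0 ≤ enorm2 v := Real.sqrt_nonneg _

lemma abs_fst_le_enorm2 (v : ℝ × ℝ) : |v.1| ≤ enorm2 v := by
  rw [enorm2, ← Real.sqrt_sq_eq_abs]
  exact Real.sqrt_le_sqrt (by nlinarith [sq_nonneg v.2])

lemma enorm2_div' (a b r : ℝ) (hr : 0 < r) : enorm2 (a / r, b / r) = enorm2 (a, b) / r := by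
  have h : (a / r) ^ 2 + (b / r) ^ 2 = (a ^ 2 + b ^ 2) / r ^ 2 := by
    field_simp
  rw [enorm2, enorm2]
  simp only [h]
  rw [Real.sqrt_div (by positivity), Real.sqrt_sq hr.le]

/-- kernels dominated by the restricted kernel
`K_R(ν₁,ν₂) = (1/R)·χ_{Ω^c}(ν₁)·F(R(ν₁−ν₂))·χ_Ω(ν₂)` and vanishing for pairs of
nearby points have vanishing normalized sums in the limit `R → ∞`. -/
theorem separated_supports_limit_zero
    (Ω : Set (ℝ × ℝ)) (hΩ : Bornology.IsBounded Ω)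
    (F : ℤ × ℤ → ℝ) (hF0 : ∀ v, 0 ≤ F v)
    (hF : Summable fun v : ℤ × ℤ => F v * enorm2 ((v.1 : ℝ), (v.2 : ℝ)))
    (δ : ℝ) (hδ : 0 < δ)
    (G : ℕ → (ℤ × ℤ) → (ℤ × ℤ) → ℝ)
    (hG : ∃ R₀ : ℕ, ∀ R ≥ R₀, ∀ ν₁ ν₂ : ℤ × ℤ,
      0 ≤ G R ν₁ ν₂ ∧
      G R ν₁ ν₂ ≤ (1 / (R : ℝ)) * Ωᶜ.indicator (fun _ => (1 : ℝ)) (toE R ν₁) *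
        F (ν₁ - ν₂) * Ω.indicator (fun _ => (1 : ℝ)) (toE R ν₂) ∧
      (enorm2 (toE R ν₁ - toE R ν₂) < δ → G R ν₁ ν₂ = 0)) :
    Tendsto (fun R : ℕ => ∑' p : (ℤ × ℤ) × (ℤ × ℤ), G R p.1 p.2) atTop (𝓝 0) := by
  classical
  obtain ⟨R₀, hG⟩ := hG
  obtain ⟨M, hM⟩ := hΩ.subset_closedBall 0
  set N : ℕ := ⌈M⌉₊ with hN
  set f : ℤ × ℤ → ℝ := fun v => F v * enorm2 ((v.1 : ℝ), (v.2 : ℝ)) with hfdef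
  have hf0 : ∀ v, 0 ≤ f v := fun v => mul_nonneg (hF0 v) (enorm2_nonneg' _)
  set g : ℕ → ℤ × ℤ → ℝ := fun R l =>
    if (R : ℝ) * δ ≤ enorm2 ((l.1 : ℝ), (l.2 : ℝ)) then f l else 0 with hgdef
  have hg0 : ∀ R l, 0 ≤ g R l := by
    intro R l; simp only [hgdef]
    split
    · exact hf0 l
    · exact le_refl 0
  have hgle : ∀ R l, g R l ≤ f l := by
    intro R l; simp only [hgdef]
    split
    · exact le_refl _
    · exact hf0 l
  have hgsum : ∀ R : ℕ, Summable (g R) :=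
    fun R => Summable.of_nonneg_of_le (hg0 R) (hgle R) hF
  set T : ℕ → ℝ := fun R => ∑' l : ℤ × ℤ, g R l with hTdef
  have hT0 : ∀ R, 0 ≤ T R := fun R => tsum_nonneg (hg0 R)
  set C : ℝ := (2 * (N : ℝ) + 1) ^ 2 / δ with hCdef
  have hC0 : 0 ≤ C := by positivity
  -- key bound
  have key : ∀ R : ℕ, R₀ ≤ R → 1 ≤ R →
      0 ≤ (∑' p : (ℤ × ℤ) × (ℤ × ℤ), G R p.1 p.2) ∧
      (∑' p : (ℤ × ℤ) × (ℤ × ℤ), G R p.1 p.2) ≤ C * T R := by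
    intro R hRR₀ hR1
    have hRpos : (0 : ℝ) < R := by exact_mod_cast Nat.lt_of_lt_of_le Nat.zero_lt_one hR1
    have hR1' : (1 : ℝ) ≤ R := by exact_mod_cast hR1
    set K : ℤ := (R : ℤ) * N with hKdef
    have hK0 : (0 : ℤ) ≤ K := by positivity
    set s : Finset (ℤ × ℤ) := Finset.Icc (-K) K ×ˢ Finset.Icc (-K) K with hsdef
    set hfun : ℤ × ℤ → ℝ := fun ν => if ν ∈ s then (1 : ℝ) else 0 with hhdef
    set c : ℝ := 1 / ((R : ℝ) ^ 2 * δ) with hcdef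
    have hc0 : 0 ≤ c := by positivity
    set U : (ℤ × ℤ) × (ℤ × ℤ) → ℝ := fun p => c * (g R (p.1 - p.2) * hfun p.2) with hUdef
    have hh0 : ∀ ν, 0 ≤ hfun ν := by
      intro ν; simp only [hhdef]; split <;> norm_num
    have hU0 : ∀ p, 0 ≤ U p := fun p =>
      mul_nonneg hc0 (mul_nonneg (hg0 R _) (hh0 _))
    -- membership in the finset
    have hmem : ∀ ν : ℤ × ℤ, toE R ν ∈ Ω → ν ∈ s := by
      intro ν hν
      have hd : dist (toE R ν) 0 ≤ M := Metric.mem_closedBall.1 (hM hν)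
      rw [Prod.dist_eq] at hd
      have hMN : M ≤ (N : ℝ) := Nat.le_ceil M
      have habs : ∀ a : ℤ, |(a : ℝ) / R| ≤ M → a ∈ Finset.Icc (-K) K := by
        intro a ha
        rw [abs_div, abs_of_nonneg hRpos.le, div_le_iff₀ hRpos] at ha
        have h2 : |(a : ℝ)| ≤ (K : ℝ) := by
          calc |(a : ℝ)| ≤ M * R := ha
            _ ≤ (N : ℝ) * R := by nlinarith
            _ = (K : ℝ) := by push_cast [hKdef]; ring
        have h3 : |a| ≤ K := by
          have h2' : ((|a| : ℤ) : ℝ) ≤ (K : ℝ) := by rw [Int.cast_abs]; exact h2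
          exact_mod_cast h2'
        rw [Finset.mem_Icc]
        exact abs_le.1 h3
      have h1 : dist (toE R ν).1 (0 : ℝ × ℝ).1 ≤ M := le_trans (le_max_left _ _) hd
      have h2 : dist (toE R ν).2 (0 : ℝ × ℝ).2 ≤ M := le_trans (le_max_right _ _) hd
      simp only [toE, Real.dist_eq, Prod.fst_zero, Prod.snd_zero, sub_zero] at h1 h2
      rw [hsdef, Finset.mem_product]
      exact ⟨habs ν.1 h1, habs ν.2 h2⟩
    -- pointwise domination
    have hGU : ∀ p : (ℤ × ℤ) × (ℤ × ℤ), G R p.1 p.2 ≤ U p := by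
      rintro ⟨ν₁, ν₂⟩
      obtain ⟨h0, h1, h2⟩ := hG R hRR₀ ν₁ ν₂
      by_cases hsep : enorm2 (toE R ν₁ - toE R ν₂) < δ
      · rw [h2 hsep]; exact hU0 _
      push_neg at hsep
      have hed : enorm2 (toE R ν₁ - toE R ν₂)
          = enorm2 (((ν₁ - ν₂).1 : ℝ), ((ν₁ - ν₂).2 : ℝ)) / R := by
        have heq : toE R ν₁ - toE R ν₂
            = (((ν₁ - ν₂).1 : ℝ) / R, ((ν₁ - ν₂).2 : ℝ) / R) := by
          rw [Prod.ext_iff]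
          simp only [toE, Prod.fst_sub, Prod.snd_sub]
          push_cast
          constructor <;> ring
        rw [heq, enorm2_div' _ _ _ hRpos]
      have hcut : (R : ℝ) * δ ≤ enorm2 (((ν₁ - ν₂).1 : ℝ), ((ν₁ - ν₂).2 : ℝ)) := by
        rw [hed, le_div_iff₀ hRpos] at hsep
        linarith
      have hgval : g R (ν₁ - ν₂) = f (ν₁ - ν₂) := if_pos hcut
      by_cases hin : toE R ν₂ ∈ Ω
      · have hind2 : Ω.indicator (fun _ => (1 : ℝ)) (toE R ν₂) = 1 :=
          Set.indicator_of_mem hin _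
        have hind1a : Ωᶜ.indicator (fun _ => (1 : ℝ)) (toE R ν₁) ≤ 1 := by
          rw [Set.indicator_apply]; split <;> norm_num
        have hind1b : 0 ≤ Ωᶜ.indicator (fun _ => (1 : ℝ)) (toE R ν₁) := by
          rw [Set.indicator_apply]; split <;> norm_num
        have hh2 : hfun ν₂ = 1 := if_pos (hmem ν₂ hin)
        rw [hind2, mul_one] at h1
        have hstep1 : (1 / (R : ℝ)) * Ωᶜ.indicator (fun _ => (1 : ℝ)) (toE R ν₁) * F (ν₁ - ν₂)
            ≤ (1 / (R : ℝ)) * F (ν₁ - ν₂) := by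
          have := mul_le_mul_of_nonneg_right
            (mul_le_mul_of_nonneg_left hind1a (by positivity : (0:ℝ) ≤ 1 / (R:ℝ)))
            (hF0 (ν₁ - ν₂))
          simpa using this
        have hFf : F (ν₁ - ν₂) * ((R : ℝ) * δ) ≤ f (ν₁ - ν₂) :=
          mul_le_mul_of_nonneg_left hcut (hF0 _)
        have hstep2 : (1 / (R : ℝ)) * F (ν₁ - ν₂) ≤ c * f (ν₁ - ν₂) := by
          have heq2 : (1 / (R : ℝ)) * F (ν₁ - ν₂) = c * (F (ν₁ - ν₂) * ((R : ℝ) * δ)) := by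
            rw [hcdef]; field_simp
          rw [heq2]
          exact mul_le_mul_of_nonneg_left hFf hc0
        have hUeq : U (ν₁, ν₂) = c * f (ν₁ - ν₂) := by
          simp only [hUdef, hgval, hh2, mul_one]
        rw [hUeq]
        exact le_trans h1 (le_trans hstep1 hstep2)
      · have hind0 : Ω.indicator (fun _ => (1 : ℝ)) (toE R ν₂) = 0 :=
          Set.indicator_of_notMem hin _
        rw [hind0, mul_zero] at h1
        exact le_trans h1 (hU0 _)
    -- summability of the majorant
    have hhsum : Summable hfun :=
      summable_of_ne_finset_zero (s := s) (fun ν hν => if_neg hν)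
    have hprod : Summable (fun q : (ℤ × ℤ) × (ℤ × ℤ) => g R q.1 * hfun q.2) :=
      (hgsum R).mul_of_nonneg hhsum (hg0 R) hh0
    have hprodc : Summable (fun q : (ℤ × ℤ) × (ℤ × ℤ) => c * (g R q.1 * hfun q.2)) :=
      hprod.mul_left c
    set e : ((ℤ × ℤ) × (ℤ × ℤ)) ≃ ((ℤ × ℤ) × (ℤ × ℤ)) :=
      { toFun := fun p => (p.1 - p.2, p.2)
        invFun := fun q => (q.1 + q.2, q.2)
        left_inv := fun p => by simp
        right_inv := fun q => by simp } with hedef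
    have hUsum : Summable U := by
      have h3 : Summable ((fun q : (ℤ × ℤ) × (ℤ × ℤ) => c * (g R q.1 * hfun q.2)) ∘ e) :=
        (Equiv.summable_iff e).mpr hprodc
      exact h3
    have hGsum : Summable (fun p : (ℤ × ℤ) × (ℤ × ℤ) => G R p.1 p.2) :=
      Summable.of_nonneg_of_le (fun p => (hG R hRR₀ p.1 p.2).1) hGU hUsum
    refine ⟨tsum_nonneg (fun p => (hG R hRR₀ p.1 p.2).1), ?_⟩
    have hSle : (∑' p : (ℤ × ℤ) × (ℤ × ℤ), G R p.1 p.2) ≤ ∑' p, U p :=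
      Summable.tsum_le_tsum hGU hGsum hUsum
    -- compute the tsum of the majorant
    have hcard : ((s.card : ℝ)) = (2 * (K : ℝ) + 1) ^ 2 := by
      have h4 : (Finset.Icc (-K) K).card = (2 * K + 1).toNat := by
        rw [Int.card_Icc]; congr 1; ring
      have h6 : (0 : ℤ) ≤ 2 * K + 1 := by linarith
      have h5 : ((Finset.Icc (-K) K).card : ℤ) = 2 * K + 1 := by
        rw [h4]; exact Int.toNat_of_nonneg h6
      have h5r : ((Finset.Icc (-K) K).card : ℝ) = 2 * (K : ℝ) + 1 := by
        exact_mod_cast h5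
      rw [hsdef, Finset.card_product]
      push_cast [h5r]
      ring
    have hsumh : ∑' ν, hfun ν = (s.card : ℝ) := by
      rw [tsum_eq_sum (s := s) (fun ν hν => if_neg hν)]
      rw [Finset.sum_congr rfl (fun ν hν => if_pos hν)]
      simp
    have hUt : ∑' p, U p = c * (s.card : ℝ) * T R := by
      have h7 : ∑' p, U p = ∑' q : (ℤ × ℤ) × (ℤ × ℤ), c * (g R q.1 * hfun q.2) :=
        e.tsum_eq (fun q : (ℤ × ℤ) × (ℤ × ℤ) => c * (g R q.1 * hfun q.2))
      rw [h7, Summable.tsum_prod' hprodc (fun b => (hhsum.mul_left (g R b)).mul_left c)]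
      have h8 : ∀ b : ℤ × ℤ, (∑' ν, c * (g R b * hfun ν)) = c * g R b * (s.card : ℝ) := by
        intro b
        rw [tsum_congr (fun ν => (mul_assoc c (g R b) (hfun ν)).symm), tsum_mul_left, hsumh]
      rw [tsum_congr h8]
      rw [tsum_congr (fun b => by ring :
        ∀ b, c * g R b * (s.card : ℝ) = (c * (s.card : ℝ)) * g R b)]
      rw [tsum_mul_left]
    have hcc : c * (s.card : ℝ) ≤ C := by
      rw [hcard]
      have hKR : (K : ℝ) = (R : ℝ) * N := by push_cast [hKdef]; ring
      have e1 : (2 * (K : ℝ) + 1) ^ 2 ≤ (R : ℝ) ^ 2 * (2 * (N : ℝ) + 1) ^ 2 := by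
        rw [hKR]
        have hN0 : (0 : ℝ) ≤ (N : ℝ) := Nat.cast_nonneg N
        nlinarith [mul_nonneg (mul_nonneg hN0 hRpos.le) (sub_nonneg.2 hR1'),
          sub_nonneg.2 hR1', mul_nonneg hN0 hRpos.le]
      calc c * (2 * (K : ℝ) + 1) ^ 2 ≤ c * ((R : ℝ) ^ 2 * (2 * (N : ℝ) + 1) ^ 2) :=
            mul_le_mul_of_nonneg_left e1 hc0
        _ = C := by rw [hcdef, hCdef]; field_simp
    calc (∑' p : (ℤ × ℤ) × (ℤ × ℤ), G R p.1 p.2) ≤ ∑' p, U p := hSle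
      _ = c * (s.card : ℝ) * T R := hUt
      _ ≤ C * T R := mul_le_mul_of_nonneg_right hcc (hT0 R)
  -- the tail tends to zero
  have tailto : Tendsto T atTop (𝓝 0) := by
    rw [Metric.tendsto_atTop]
    intro ε hε
    obtain ⟨sf, hsf⟩ : ∃ sf : Finset (ℤ × ℤ), (∑' b : { x // x ∉ sf }, f b) < ε :=
      ((tendsto_order.1 (tendsto_tsum_compl_atTop_zero f)).2 ε hε).exists
    set B : ℕ := sf.sup (fun l => ⌈enorm2 ((l.1 : ℝ), (l.2 : ℝ)) / δ⌉₊) + 1 with hBdef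
    refine ⟨B, fun R hR => ?_⟩
    have hind : Summable (Set.indicator { x : ℤ × ℤ | x ∉ sf } f) :=
      Summable.of_nonneg_of_le (fun l => Set.indicator_nonneg (fun x _ => hf0 x) l)
        (Set.indicator_le_self' (fun x _ => hf0 x)) hF
    have h5 : T R ≤ ∑' x, Set.indicator { x : ℤ × ℤ | x ∉ sf } f x := by
      apply Summable.tsum_le_tsum _ (hgsum R) hind
      intro l
      simp only [hgdef]
      split
      · rename_i hcut
        have hlnot : l ∉ sf := by
          intro hl
          have h6 : (⌈enorm2 ((l.1 : ℝ), (l.2 : ℝ)) / δ⌉₊ : ℕ) ≤ B - 1 := by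
            rw [hBdef]; simpa using Finset.le_sup (f := fun l =>
              ⌈enorm2 ((l.1 : ℝ), (l.2 : ℝ)) / δ⌉₊) hl
          have h7 : (⌈enorm2 ((l.1 : ℝ), (l.2 : ℝ)) / δ⌉₊ : ℕ) < R :=
            lt_of_lt_of_le (by omega : (⌈enorm2 ((l.1 : ℝ), (l.2 : ℝ)) / δ⌉₊ : ℕ) < B) hR
          have h8 : enorm2 ((l.1 : ℝ), (l.2 : ℝ)) / δ ≤
              (⌈enorm2 ((l.1 : ℝ), (l.2 : ℝ)) / δ⌉₊ : ℝ) := Nat.le_ceil _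
          have h9 : ((⌈enorm2 ((l.1 : ℝ), (l.2 : ℝ)) / δ⌉₊ : ℕ) : ℝ) < (R : ℝ) := by
            exact_mod_cast h7
          have h10 : enorm2 ((l.1 : ℝ), (l.2 : ℝ)) < (R : ℝ) * δ := by
            rw [div_le_iff₀ hδ] at h8
            nlinarith
          linarith
        rw [Set.indicator_of_mem (show l ∈ {x : ℤ × ℤ | x ∉ sf} from hlnot) f]
      · exact Set.indicator_nonneg (fun x _ => hf0 x) l
    have h11 : (∑' x, Set.indicator { x : ℤ × ℤ | x ∉ sf } f x)
        = ∑' b : { x // x ∉ sf }, f b := by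
      rw [← tsum_subtype { x : ℤ × ℤ | x ∉ sf } f]
      rfl
    rw [dist_zero_right, Real.norm_eq_abs, abs_of_nonneg (hT0 R)]
    calc T R ≤ _ := h5
      _ = ∑' b : { x // x ∉ sf }, f b := h11
      _ < ε := hsf
  have climit : Tendsto (fun R : ℕ => C * T R) atTop (𝓝 0) := by
    simpa using tailto.const_mul C
  apply tendsto_of_tendsto_of_tendsto_of_le_of_le' tendsto_const_nhds climit
  · filter_upwards [eventually_ge_atTop R₀, eventually_ge_atTop 1] with R h1 h2
    exact (key R h1 h2).1
  · filter_upwards [eventually_ge_atTop R₀, eventually_ge_atTop 1] with R h1 h2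
    exact (key R h1 h2).2
end
end

section
/- Let F : ℤ² → [0,∞) satisfy Σ_{λ∈ℤ²} F(λ)(|λ|+1) < ∞. Let v ∈ ℤ², and let C₁, C₂ ⊂ ℝ² be two closed bounded cones with common vertex v whose sides are segments of rational lines and whose apertures are smaller than π, and suppose C₁ ∩ C₂ = {v}; precisely, C_i = (v + {α u_i + β w_i : α,β ≥ 0}) ∩ B̄(v,ρ_i) where u_i, w_i ∈ ℤ² are linearly independent and B̄(v,ρ_i) is a closed Euclidean disk, and the two cones meet only at v. Suppose that for all sufficiently large positive integers R, G_R : (1/R)ℤ² × (1/R)ℤ² → [0,∞) satisfies 0 ≤ G_R(ν₁,ν₂) ≤ (1/R)·F(R(ν₁−ν₂)) for all ν₁,ν₂ ∈ (1/R)ℤ², and G_R(ν₁,ν₂) = 0 whenever (ν₁,ν₂) ∉ C₁ × C₂. Then lim_{R→∞} Σ_{ν₁,ν₂ ∈ (1/R)ℤ²} G_R(ν₁,ν₂) = 0. -/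
/-!
Distances are measured in the sup norm of `ℝ × ℝ`, which is dominated by the Euclidean `enorm2`.
Near their common vertex `v` the two cones are genuine cones meeting only at `v`, so compactness
of a sphere and homogeneity give `c > 0` with `c ‖p - v‖ ≤ ‖p - q‖` for `p ∈ C₁`, `q ∈ C₂`.
Hence if `G_R(ν₁, ν₂) ≠ 0` and `μ = R (ν₁ - ν₂) ∈ ℤ²`, the point `R ν₂` lies within
`min(K ‖μ‖, ρ₂ R)` of `R v`, where `K = 1 + 1/c`; so for fixed `μ` at most
`(2 min(K ‖μ‖, ρ₂ R) + 1)²` pairs contribute, each at most `F(μ) / R`. This bound tends to `0`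
for each `μ` and, since `min(a, b)² ≤ a b`, is dominated by a multiple of `F(μ) (‖μ‖ + 1)`;
dominated convergence concludes.
-/

open Filter Topology

noncomputable section

/-- Cast an integer pair to ℝ². -/
def toR (v : ℤ × ℤ) : ℝ × ℝ := ((v.1 : ℝ), (v.2 : ℝ))

theorem tsum_prod_le_of_tsum_fiber_le {α β : Type*} {f : α × β → ℝ} {b : α → ℝ} (hf : 0 ≤ f)
    (hfiber : ∀ a, Summable fun y => f (a, y)) (hle : ∀ a, ∑' y, f (a, y) ≤ b a)
    (hb : Summable b) : ∑' p, f p ≤ ∑' a, b a := by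
  have hsum : Summable fun a => ∑' y, f (a, y) :=
    hb.of_nonneg_of_le (fun a => tsum_nonneg fun y => hf _) hle
  rw [((summable_prod_of_nonneg hf).2 ⟨hfiber, hsum⟩).tsum_prod' hfiber]
  exact hsum.tsum_le_tsum hle hb

section ConeSeparation

variable {E : Type*} [NormedAddCommGroup E] [NormedSpace ℝ E]

def IsConicNear (A : Set E) (v : E) (r : ℝ) : Prop :=
  ∀ p ∈ A, ∀ t : ℝ, 0 < t → ‖t • (p - v)‖ ≤ r → v + t • (p - v) ∈ A

theorem IsConicNear.mono {A : Set E} {v : E} {r r' : ℝ} (h : IsConicNear A v r) (hr : r' ≤ r) :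
    IsConicNear A v r' :=
  fun p hp t ht htp => h p hp t ht (htp.trans hr)

/-- Pairs at sup-distance exactly `r` from `(v, v)` stay a fixed distance apart by compactness;
rescaling about `v` reduces every other pair to this case. -/
theorem exists_pos_mul_norm_sub_le_norm_sub [ProperSpace E] {A B : Set E} {v : E} {r : ℝ}
    (hr : 0 < r) (hA : IsClosed A) (hB : IsClosed B) (hAB : A ∩ B ⊆ {v})
    (hAc : IsConicNear A v r) (hBc : IsConicNear B v r) :
    ∃ c > 0, ∀ p ∈ A, ∀ q ∈ B, c * ‖p - v‖ ≤ ‖p - q‖ := by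
  set S : Set (E × E) := A ×ˢ B ∩ Metric.sphere (v, v) r
  have hS : IsCompact S := (isCompact_sphere _ _).inter_left (hA.prod hB)
  have hpos : ∀ x ∈ S, 0 < ‖x.1 - x.2‖ := by
    rintro ⟨p, q⟩ ⟨⟨hp, hq⟩, hpq⟩
    refine norm_pos_iff.2 (sub_ne_zero.2 fun h => hr.ne' ?_)
    obtain rfl : q = p := h.symm
    obtain rfl : q = v := hAB ⟨hp, hq⟩
    simpa using hpq.symm
  obtain ⟨δ, hδ, hδS⟩ := hS.exists_forall_le' (by fun_prop) hpos
  refine ⟨δ / r, div_pos hδ hr, fun p hp q hq => ?_⟩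
  rcases eq_or_ne p v with rfl | hpv
  · simp
  set M := max ‖p - v‖ ‖q - v‖
  have hM : 0 < M := (norm_pos_iff.2 (sub_ne_zero.2 hpv)).trans_le (le_max_left _ _)
  set t := r / M
  have ht : 0 < t := div_pos hr hM
  have hscaled : ∀ x, ‖x - v‖ ≤ M → ‖t • (x - v)‖ ≤ r := fun x hx => by
    rw [norm_smul, Real.norm_of_nonneg ht.le]
    calc t * ‖x - v‖ ≤ t * M := by gcongr
      _ = r := div_mul_cancel₀ r hM.ne'
  have hmem : (v + t • (p - v), v + t • (q - v)) ∈ S := by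
    refine ⟨⟨hAc p hp t ht (hscaled p (le_max_left _ _)),
      hBc q hq t ht (hscaled q (le_max_right _ _))⟩, ?_⟩
    rw [Metric.mem_sphere, Prod.dist_eq, dist_eq_norm, dist_eq_norm, add_sub_cancel_left,
      add_sub_cancel_left, norm_smul, norm_smul, Real.norm_of_nonneg ht.le,
      ← mul_max_of_nonneg _ _ ht.le]
    exact div_mul_cancel₀ r hM.ne'
  have hδt : δ ≤ t * ‖p - q‖ := by
    have := hδS _ hmem
    rwa [add_sub_add_left_eq_sub, ← smul_sub, sub_sub_sub_cancel_right, norm_smul,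
      Real.norm_of_nonneg ht.le] at this
  calc δ / r * ‖p - v‖ ≤ δ / r * M := by gcongr; exact le_max_left _ _
    _ = δ / t := by rw [div_div_eq_mul_div, div_mul_eq_mul_div]
    _ ≤ ‖p - q‖ := by rw [div_le_iff₀ ht]; linarith

end ConeSeparation

theorem norm_le_enorm2 (x : ℝ × ℝ) : ‖x‖ ≤ enorm2 x :=
  max_le (Real.abs_le_sqrt (by nlinarith)) (Real.abs_le_sqrt (by nlinarith))

theorem enorm2_le_two_mul_norm (x : ℝ × ℝ) : enorm2 x ≤ 2 * ‖x‖ := by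
  have h₁ : |x.1| ≤ ‖x‖ := le_max_left _ _
  have h₂ : |x.2| ≤ ‖x‖ := le_max_right _ _
  refine Real.sqrt_le_iff.2 ⟨by positivity, ?_⟩
  rw [← sq_abs x.1, ← sq_abs x.2]
  nlinarith [abs_nonneg x.1, abs_nonneg x.2]

theorem continuous_enorm2 : Continuous enorm2 := by
  unfold enorm2; fun_prop

def ratCone (v u w : ℤ × ℤ) (ρ : ℝ) : Set (ℝ × ℝ) :=
  {p | (∃ α β : ℝ, 0 ≤ α ∧ 0 ≤ β ∧ p = toR v + α • toR u + β • toR w) ∧ enorm2 (p - toR v) ≤ ρ}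

theorem isClosed_ratCone {v u w : ℤ × ℤ} (ρ : ℝ) (hli : u.1 * w.2 - u.2 * w.1 ≠ 0) :
    IsClosed (ratCone v u w ρ) := by
  set L : ℝ × ℝ →ₗ[ℝ] ℝ × ℝ :=
    (LinearMap.fst ℝ ℝ ℝ).smulRight (toR u) + (LinearMap.snd ℝ ℝ ℝ).smulRight (toR w)
  have hker : LinearMap.ker L = ⊥ := by
    refine LinearMap.ker_eq_bot'.2 fun x hx => ?_
    have h₁ : x.1 * u.1 + x.2 * w.1 = 0 := by simpa [L, toR] using congrArg Prod.fst hx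
    have h₂ : x.1 * u.2 + x.2 * w.2 = 0 := by simpa [L, toR] using congrArg Prod.snd hx
    have hD : ((u.1 * w.2 - u.2 * w.1 : ℤ) : ℝ) ≠ 0 := Int.cast_ne_zero.2 hli
    push_cast at hD
    have hx₁ : x.1 = 0 := mul_right_cancel₀ hD (by linear_combination w.2 * h₁ - w.1 * h₂)
    have hx₂ : x.2 = 0 := mul_right_cancel₀ hD (by linear_combination u.1 * h₂ - u.2 * h₁)
    exact Prod.ext hx₁ hx₂
  have hemb : Topology.IsClosedEmbedding fun x => toR v + L x :=
    (Homeomorph.addLeft (toR v)).isClosedEmbedding.comp (L.isClosedEmbedding_of_injective hker)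
  have hcone : {p | ∃ α β : ℝ, 0 ≤ α ∧ 0 ≤ β ∧ p = toR v + α • toR u + β • toR w} =
      (fun x => toR v + L x) '' (Set.Ici 0 ×ˢ Set.Ici 0) := by
    ext p
    constructor
    · rintro ⟨α, β, hα, hβ, rfl⟩
      exact ⟨(α, β), ⟨hα, hβ⟩, by simp [L, add_assoc]⟩
    · rintro ⟨⟨α, β⟩, ⟨hα, hβ⟩, rfl⟩
      exact ⟨α, β, hα, hβ, by simp [L, add_assoc]⟩
  exact (hcone ▸ hemb.isClosedMap _ (isClosed_Ici.prod isClosed_Ici)).inter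
    (isClosed_le (continuous_enorm2.comp (continuous_sub_right _)) continuous_const)

theorem isConicNear_ratCone (v u w : ℤ × ℤ) (ρ : ℝ) :
    IsConicNear (ratCone v u w ρ) (toR v) (ρ / 2) := by
  rintro p ⟨⟨α, β, hα, hβ, rfl⟩, -⟩ t ht htp
  refine ⟨⟨t * α, t * β, by positivity, by positivity, ?_⟩, ?_⟩
  · simp only [add_sub_cancel_left, smul_add, smul_smul, add_assoc]
  · rw [add_sub_cancel_left]
    linarith [enorm2_le_two_mul_norm (t • (toR v + α • toR u + β • toR w - toR v))]

theorem norm_sub_le_of_mem_ratCone {v u w : ℤ × ℤ} {ρ : ℝ} {p : ℝ × ℝ}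
    (hp : p ∈ ratCone v u w ρ) : ‖p - toR v‖ ≤ ρ :=
  (norm_le_enorm2 _).trans hp.2

theorem toR_add (a b : ℤ × ℤ) : toR (a + b) = toR a + toR b := by
  ext <;> simp [toR]

theorem toR_nsmul (n : ℕ) (a : ℤ × ℤ) : toR (n • a) = (n : ℝ) • toR a := by
  ext <;> simp [toR]

theorem toE_eq_inv_smul (R : ℕ) (a : ℤ × ℤ) : toE R a = (R : ℝ)⁻¹ • toR a := by
  ext <;> simp [toE, toR, div_eq_inv_mul]

theorem norm_sub_le_of_mul_norm_sub_le {E : Type*} [SeminormedAddCommGroup E] {p q x : E}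
    {c : ℝ} (hc : 0 < c) (hsep : c * ‖p - x‖ ≤ ‖p - q‖) : ‖q - x‖ ≤ (1 + c⁻¹) * ‖p - q‖ := by
  have hp : ‖p - x‖ ≤ c⁻¹ * ‖p - q‖ := by rwa [le_inv_mul_iff₀ hc]
  calc ‖q - x‖ ≤ ‖q - p‖ + ‖p - x‖ := norm_sub_le_norm_sub_add_norm_sub q p x
    _ ≤ ‖p - q‖ + c⁻¹ * ‖p - q‖ := by rw [norm_sub_rev]; gcongr
    _ = (1 + c⁻¹) * ‖p - q‖ := by ring

theorem norm_toR_sub_nsmul_le_of_mem {C₁ C₂ : Set (ℝ × ℝ)} {v : ℤ × ℤ} {c ρ : ℝ} (hc : 0 < c)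
    (hsep : ∀ p ∈ C₁, ∀ q ∈ C₂, c * ‖p - toR v‖ ≤ ‖p - q‖) (hC₂ : ∀ q ∈ C₂, ‖q - toR v‖ ≤ ρ)
    {R : ℕ} (hR : 0 < R) {ν μ : ℤ × ℤ} (h₁ : toE R (ν + μ) ∈ C₁) (h₂ : toE R ν ∈ C₂) :
    ‖toR ν - toR (R • v)‖ ≤ min ((1 + c⁻¹) * enorm2 (toR μ)) (ρ * R) := by
  have hR' : (0 : ℝ) < R := by exact_mod_cast hR
  have hscale : toR ν - toR (R • v) = (R : ℝ) • (toE R ν - toR v) := by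
    rw [toE_eq_inv_smul, smul_sub, smul_inv_smul₀ hR'.ne', toR_nsmul]
  have hdiff : toE R (ν + μ) - toE R ν = (R : ℝ)⁻¹ • toR μ := by
    rw [toE_eq_inv_smul, toE_eq_inv_smul, toR_add, smul_add, add_sub_cancel_left]
  rw [hscale, norm_smul, Real.norm_of_nonneg hR'.le, mul_comm (R : ℝ), ← le_div_iff₀ hR',
    ← min_div_div_right hR'.le, mul_div_cancel_right₀ _ hR'.ne']
  refine le_min ?_ (hC₂ _ h₂)
  calc ‖toE R ν - toR v‖ ≤ (1 + c⁻¹) * ‖toE R (ν + μ) - toE R ν‖ :=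
        norm_sub_le_of_mul_norm_sub_le hc (hsep _ h₁ _ h₂)
    _ ≤ (1 + c⁻¹) * enorm2 (toR μ) / R := by
        rw [hdiff, norm_smul, Real.norm_of_nonneg (inv_nonneg.2 hR'.le), mul_div_assoc,
          inv_mul_eq_div]
        gcongr
        exact norm_le_enorm2 _

def latticeBox (a : ℤ × ℤ) (d : ℕ) : Finset (ℤ × ℤ) :=
  Finset.Icc (a - ((d : ℤ), (d : ℤ))) (a + ((d : ℤ), (d : ℤ)))

theorem card_latticeBox (a : ℤ × ℤ) (d : ℕ) : (latticeBox a d).card = (2 * d + 1) ^ 2 := by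
  rw [latticeBox, Finset.card_Icc_prod, Int.card_Icc, Int.card_Icc, sq]
  congr 1 <;> simp <;> omega

theorem mem_latticeBox_floor {a ν : ℤ × ℤ} {m : ℝ} (h : ‖toR ν - toR a‖ ≤ m) :
    ν ∈ latticeBox a ⌊m⌋₊ := by
  have hbound : ∀ x y : ℤ, |(x : ℝ) - y| ≤ m → (x - y).natAbs ≤ ⌊m⌋₊ := fun x y hxy =>
    Nat.le_floor (by rw [Nat.cast_natAbs]; push_cast; exact hxy)
  have h₁ := hbound ν.1 a.1 ((le_max_left _ _).trans h)
  have h₂ := hbound ν.2 a.2 ((le_max_right _ _).trans h)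
  simp only [latticeBox, Finset.mem_Icc, Prod.le_def, Prod.fst_sub, Prod.snd_sub, Prod.fst_add,
    Prod.snd_add]
  omega

theorem summable_and_tsum_le_of_norm_le {f : ℤ × ℤ → ℝ} {a : ℤ × ℤ} {m b : ℝ} (hm : 0 ≤ m)
    (hb : 0 ≤ b) (hf : ∀ ν, f ν ≤ b) (hsupp : ∀ ν, f ν ≠ 0 → ‖toR ν - toR a‖ ≤ m) :
    Summable f ∧ ∑' ν, f ν ≤ (2 * m + 1) ^ 2 * b := by
  have hzero : ∀ ν ∉ latticeBox a ⌊m⌋₊, f ν = 0 := fun ν hν =>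
    not_not.1 fun hne => hν (mem_latticeBox_floor (hsupp ν hne))
  refine ⟨summable_of_ne_finset_zero hzero, ?_⟩
  have hcard : ((latticeBox a ⌊m⌋₊).card : ℝ) ≤ (2 * m + 1) ^ 2 := by
    rw [card_latticeBox]
    push_cast
    gcongr
    exact Nat.floor_le hm
  calc ∑' ν, f ν = ∑ ν ∈ latticeBox a ⌊m⌋₊, f ν := tsum_eq_sum hzero
    _ ≤ (latticeBox a ⌊m⌋₊).card * b := by
      simpa using Finset.sum_le_card_nsmul _ _ _ fun ν _ => hf ν
    _ ≤ (2 * m + 1) ^ 2 * b := by gcongr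

theorem sq_min_div_le {K ρ e R : ℝ} (hK : 0 ≤ K) (hρ : 0 ≤ ρ) (he : 0 ≤ e) (hR : 1 ≤ R) :
    (2 * min (K * e) (ρ * R) + 1) ^ 2 / R ≤ (2 * K + 1) * (2 * ρ + 1) * (e + 1) := by
  have hm₀ : 0 ≤ min (K * e) (ρ * R) := le_min (by positivity) (by nlinarith)
  have hsq : (2 * min (K * e) (ρ * R) + 1) ^ 2 ≤ (2 * (K * e) + 1) * (2 * (ρ * R) + 1) := by
    rw [sq]
    gcongr
    exacts [min_le_left _ _, min_le_right _ _]
  have hKe : 2 * (K * e) + 1 ≤ (2 * K + 1) * (e + 1) := by nlinarith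
  have hρR : 2 * (ρ * R) + 1 ≤ (2 * ρ + 1) * R := by nlinarith
  rw [div_le_iff₀ (by linarith)]
  calc _ ≤ (2 * (K * e) + 1) * (2 * (ρ * R) + 1) := hsq
    _ ≤ (2 * K + 1) * (e + 1) * ((2 * ρ + 1) * R) := by gcongr
    _ = _ := by ring

section DominatedConvergence

variable {ι : Type*} {K ρ : ℝ} {e F : ι → ℝ}

theorem sq_min_div_mul_le (hK : 0 ≤ K) (hρ : 0 ≤ ρ) (he : 0 ≤ e) (hF0 : 0 ≤ F) {R : ℕ}
    (hR : 1 ≤ R) (i : ι) :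
    (2 * min (K * e i) (ρ * R) + 1) ^ 2 / R * F i ≤
      (2 * K + 1) * (2 * ρ + 1) * (F i * (e i + 1)) := by
  rw [mul_comm (F i), ← mul_assoc]
  exact mul_le_mul_of_nonneg_right (sq_min_div_le hK hρ (he i) (by exact_mod_cast hR)) (hF0 i)

theorem summable_sq_min_div_mul (hK : 0 ≤ K) (hρ : 0 ≤ ρ) (he : 0 ≤ e) (hF0 : 0 ≤ F)
    (hF : Summable fun i => F i * (e i + 1)) {R : ℕ} (hR : 1 ≤ R) :
    Summable fun i => (2 * min (K * e i) (ρ * R) + 1) ^ 2 / R * F i :=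
  (hF.mul_left _).of_nonneg_of_le (fun i => mul_nonneg (by positivity) (hF0 i))
    (sq_min_div_mul_le hK hρ he hF0 hR)

theorem tendsto_tsum_sq_min_div_mul (hK : 0 ≤ K) (hρ : 0 ≤ ρ) (he : 0 ≤ e) (hF0 : 0 ≤ F)
    (hF : Summable fun i => F i * (e i + 1)) :
    Tendsto (fun R : ℕ => ∑' i, (2 * min (K * e i) (ρ * R) + 1) ^ 2 / R * F i) atTop (𝓝 0) := by
  have hlim (i : ι) : Tendsto (fun R : ℕ => (2 * min (K * e i) (ρ * R) + 1) ^ 2 / R * F i)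
      atTop (𝓝 0) := by
    refine squeeze_zero (fun R => mul_nonneg (by positivity) (hF0 i)) (fun R => ?_)
      (tendsto_const_div_atTop_nhds_zero_nat ((2 * (K * e i) + 1) ^ 2 * F i))
    have hm₀ : 0 ≤ min (K * e i) (ρ * R) := le_min (mul_nonneg hK (he i)) (by positivity)
    rw [div_mul_eq_mul_div]
    gcongr
    · exact hF0 i
    · exact min_le_left _ _
  simpa using tendsto_tsum_of_dominated_convergence (hF.mul_left ((2 * K + 1) * (2 * ρ + 1))) hlim
    (eventually_ge_atTop 1 |>.mono fun R hR i => by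
      rw [Real.norm_of_nonneg (mul_nonneg (by positivity) (hF0 i))]
      exact sq_min_div_mul_le hK hρ he hF0 hR i)

end DominatedConvergence

/-- kernels supported on a pair of closed bounded rational cones
meeting only at their common lattice vertex have vanishing normalized sums. -/
theorem supports_in_cones_limit_zero
    (F : ℤ × ℤ → ℝ) (hF0 : ∀ v, 0 ≤ F v)
    (hF : Summable fun v : ℤ × ℤ => F v * (enorm2 (toR v) + 1))
    (v : ℤ × ℤ) (u₁ w₁ u₂ w₂ : ℤ × ℤ) (ρ₁ ρ₂ : ℝ) (hρ₁ : 0 < ρ₁) (hρ₂ : 0 < ρ₂)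
    (hli₁ : u₁.1 * w₁.2 - u₁.2 * w₁.1 ≠ 0)
    (hli₂ : u₂.1 * w₂.2 - u₂.2 * w₂.1 ≠ 0)
    (C₁ C₂ : Set (ℝ × ℝ))
    (hC₁ : C₁ = {p : ℝ × ℝ |
      (∃ α β : ℝ, 0 ≤ α ∧ 0 ≤ β ∧ p = toR v + α • toR u₁ + β • toR w₁) ∧
      enorm2 (p - toR v) ≤ ρ₁})
    (hC₂ : C₂ = {p : ℝ × ℝ |
      (∃ α β : ℝ, 0 ≤ α ∧ 0 ≤ β ∧ p = toR v + α • toR u₂ + β • toR w₂) ∧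
      enorm2 (p - toR v) ≤ ρ₂})
    (hsep : C₁ ∩ C₂ = {toR v})
    (G : ℕ → (ℤ × ℤ) → (ℤ × ℤ) → ℝ)
    (hG : ∃ R₀ : ℕ, ∀ R ≥ R₀, ∀ ν₁ ν₂ : ℤ × ℤ,
      0 ≤ G R ν₁ ν₂ ∧
      G R ν₁ ν₂ ≤ (1 / (R : ℝ)) * F (ν₁ - ν₂) ∧
      ((toE R ν₁, toE R ν₂) ∉ C₁ ×ˢ C₂ → G R ν₁ ν₂ = 0)) :
    Tendsto (fun R : ℕ => ∑' p : (ℤ × ℤ) × (ℤ × ℤ), G R p.1 p.2) atTop (𝓝 0) := by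
  obtain ⟨R₀, hG⟩ := hG
  obtain rfl : C₁ = ratCone v u₁ w₁ ρ₁ := hC₁
  obtain rfl : C₂ = ratCone v u₂ w₂ ρ₂ := hC₂
  obtain ⟨c, hc, hsepC⟩ := exists_pos_mul_norm_sub_le_norm_sub (half_pos (lt_min hρ₁ hρ₂))
    (isClosed_ratCone ρ₁ hli₁) (isClosed_ratCone ρ₂ hli₂) hsep.subset
    ((isConicNear_ratCone v u₁ w₁ ρ₁).mono (by gcongr; exact min_le_left _ _))
    ((isConicNear_ratCone v u₂ w₂ ρ₂).mono (by gcongr; exact min_le_right _ _))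
  have hK : 0 ≤ 1 + c⁻¹ := by positivity
  have he : 0 ≤ fun μ => enorm2 (toR μ) := fun μ => Real.sqrt_nonneg _
  refine squeeze_zero' ?_ ?_ (tendsto_tsum_sq_min_div_mul hK hρ₂.le he hF0 hF)
  · filter_upwards [eventually_ge_atTop R₀] with R hR
    exact tsum_nonneg fun p => (hG R hR p.1 p.2).1
  filter_upwards [eventually_ge_atTop (max R₀ 1)] with R hR
  obtain ⟨hR₀, hR₁⟩ := max_le_iff.1 hR
  have hfiber (μ : ℤ × ℤ) := summable_and_tsum_le_of_norm_le (f := fun ν => G R (ν + μ) ν)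
    (a := R • v) (m := min ((1 + c⁻¹) * enorm2 (toR μ)) (ρ₂ * R)) (b := (R : ℝ)⁻¹ * F μ)
    (le_min (mul_nonneg hK (he μ)) (by positivity)) (mul_nonneg (by positivity) (hF0 μ))
    (fun ν => by simpa [div_eq_inv_mul] using (hG R hR₀ (ν + μ) ν).2.1)
    (fun ν hν => by
      have hmem := not_imp_comm.1 (hG R hR₀ (ν + μ) ν).2.2 hν
      exact norm_toR_sub_nsmul_le_of_mem hc hsepC (fun q hq => norm_sub_le_of_mem_ratCone hq) hR₁
        hmem.1 hmem.2)
  rw [← (Equiv.prodCongrLeft fun ν => Equiv.addLeft ν).tsum_eq]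
  exact tsum_prod_le_of_tsum_fiber_le (fun q => (hG R hR₀ _ _).1) (fun μ => (hfiber μ).1)
    (fun μ => (hfiber μ).2.trans_eq (by ring)) (summable_sq_min_div_mul hK hρ₂.le he hF0 hF hR₁)
end
end

section
/- Let m,n be relatively prime integers with n > 0 and 0 ≤ m ≤ n, and let F : ℤ² → [0,∞) satisfy Σ_{λ∈ℤ²} F(λ)(|λ|+1) < ∞. Then the limit over positive integers R of (1/R) · Σ_{x₁=0}^{Rn−1} Σ_{x₂=0}^{Rn−1} Σ_{y₁∈ℤ, y₁ > (m/n)x₁} Σ_{y₂∈ℤ, y₂ ≤ (m/n)x₂} F(x₁−x₂, y₁−y₂) exists and equals √(n²+m²) · Σ_{(x,y)∈ℤ², y > (m/n)x} dist((x,y), G) · F(x,y), where G = {(t,(m/n)t) : t ∈ ℝ} is the graph of H(x) = (m/n)x and dist is the Euclidean distance from a point to this line. -/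
/-!
Writing `y₁ = y₂ + b` and `x₁ = x₂ + a`, the double sum becomes `∑ᵥ N_R(v) F(v)`, where `N_R(v)`
counts the pairs `(q, q + v)` of lattice points in the strip `[0, Rn) × ℤ` with `q` on or below the
line `y = (m/n) x` and `q + v` above it. Column `x` contributes `(b - (A(x+a) - A(x)))⁺` such pairs,
where `A(x) = ⌊(m/n) x⌋`; as `b` is an integer, this is `b - (A(x+a) - A(x))` when `m a < n b` and
`0` otherwise. Since `A(x + n) = A(x) + m`, the differences `A(x+a) - A(x)` add up to exactly
`R m a` over `Rn` consecutive columns, so `N_R(v) = R (n b - m a)⁺` up to the at most `2|a|` columns in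
which `q + v` leaves the strip. Hence `N_R(v) / R → (n b - m a)⁺ = √(n² + m²) · dist(v, G)` for `v`
above `G`, and dominated convergence applies because `N_R(v) / R = O(|v| + 1)`.
-/

open Filter Topology

noncomputable section

/-- Euclidean distance from the point `p ∈ ℤ²` to the line `G = {(t,(m/n)t) : t ∈ ℝ}`. -/
def distToGraph (m n : ℕ) (p : ℤ × ℤ) : ℝ :=
  sInf (Set.range fun t : ℝ =>
    Real.sqrt (((p.1 : ℝ) - t) ^ 2 + ((p.2 : ℝ) - (m : ℝ) / n * t) ^ 2))

open Finset

theorem tsum_ite_lt_add_le {M : Type*} [AddCommMonoid M] [TopologicalSpace M] (g : M) (b c d : ℤ) :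
    ∑' y : ℤ, (if c < y + b ∧ y ≤ d then g else 0) = (b + d - c).toNat • g := by
  have hmem : ∀ y : ℤ, (c < y + b ∧ y ≤ d) ↔ y ∈ Ioc (c - b) d := by
    intro y; rw [mem_Ioc]; omega
  simp_rw [hmem]
  rw [tsum_eq_sum (s := Ioc (c - b) d) (fun y hy => if_neg hy), sum_ite_mem, inter_self,
    sum_const, Int.card_Ioc, show d - (c - b) = b + d - c by ring]

theorem toNat_add_le_mul (b k : ℤ) :
    ((b + k).toNat : ℝ) ≤ (|(k : ℝ)| + 1) * (|(b : ℝ)| + 1) := by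
  have h : ((b + k).toNat : ℤ) ≤ |b| + |k| := by
    rw [Int.toNat_eq_max]
    exact max_le (add_le_add (le_abs_self b) (le_abs_self k)) (by positivity)
  have h' : ((b + k).toNat : ℝ) ≤ |(b : ℝ)| + |(k : ℝ)| := by exact_mod_cast h
  nlinarith [mul_nonneg (abs_nonneg (b : ℝ)) (abs_nonneg (k : ℝ))]

theorem tsum_tsum_ite_lt_le_sub {f : ℤ → ℝ} (hf : Summable fun b : ℤ => ‖f b‖ * (|(b : ℝ)| + 1))
    (c d : ℤ) :
    ∑' y₁ : ℤ, ∑' y₂ : ℤ, (if c < y₁ ∧ y₂ ≤ d then f (y₁ - y₂) else 0) =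
      ∑' b : ℤ, (b + d - c).toNat * f b := by
  set h : ℤ × ℤ → ℝ := fun p => if c < p.2 + p.1 ∧ p.2 ≤ d then f p.1 else 0
  have hslice : ∀ b, ∑' y, h (b, y) = (b + d - c).toNat * f b := fun b => by
    simp only [h, tsum_ite_lt_add_le, nsmul_eq_mul]
  have hsum : Summable h := by
    refine .of_norm ((summable_prod_of_nonneg fun _ => norm_nonneg _).2 ⟨fun b => ?_, ?_⟩)
    · exact summable_of_ne_finset_zero (s := Ioc (c - b) d) fun y hy => by
        simp only [h]; rw [if_neg (by rw [mem_Ioc] at hy; omega), norm_zero]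
    · refine .of_nonneg_of_le (fun _ => tsum_nonneg fun _ => norm_nonneg _) (fun b => ?_)
        (hf.mul_left (|((d - c : ℤ) : ℝ)| + 1))
      simp only [h, apply_ite (‖·‖), norm_zero, tsum_ite_lt_add_le, nsmul_eq_mul, add_sub_assoc]
      rw [mul_comm, mul_left_comm]
      exact mul_le_mul_of_nonneg_left (toNat_add_le_mul b (d - c)) (norm_nonneg _)
  set G : ℤ × ℤ → ℝ := fun p => if c < p.1 ∧ p.2 ≤ d then f (p.1 - p.2) else 0
  let e : ℤ × ℤ ≃ ℤ × ℤ :=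
    { toFun := fun p => (p.2 + p.1, p.2)
      invFun := fun p => (p.1 - p.2, p.2)
      left_inv := fun p => by simp
      right_inv := fun p => by simp }
  have hcomp : G ∘ e = h := by
    ext p; simp [G, e, h]
  calc ∑' y₁, ∑' y₂, G (y₁, y₂) = ∑' p, G p := ((e.summable_iff.1 (hcomp ▸ hsum)).tsum_prod).symm
    _ = ∑' p, (G ∘ e) p := (e.tsum_eq G).symm
    _ = ∑' b, ∑' y, h (b, y) := by rw [hcomp, hsum.tsum_prod]
    _ = _ := tsum_congr hslice

theorem tsum_ite_fst_eq {α β M : Type*} [AddCommMonoid M] [TopologicalSpace M] [DecidableEq α]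
    (a : α) (g : α × β → M) :
    ∑' v : α × β, (if v.1 = a then g v else 0) = ∑' b, g (a, b) := by
  rw [← (Prod.mk_right_injective a).tsum_eq]
  · simp
  · intro v hv
    by_contra h
    exact hv (if_neg fun h' => h ⟨v.2, by simp [← h']⟩)

theorem sum_range_ite_natCast_eq {M : Type*} [AddCommMonoid M] (L : ℕ) (ψ : ℤ → M) (z : ℤ) :
    ∑ x ∈ range L, (if (x : ℤ) = z then ψ x else 0) = if 0 ≤ z ∧ z < L then ψ z else 0 := by
  split_ifs with hz
  · lift z to ℕ using hz.1
    have : z < L := by exact_mod_cast hz.2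
    simp [this]
  · refine sum_eq_zero fun x hx => if_neg ?_
    rintro rfl
    exact hz ⟨Int.natCast_nonneg x, by exact_mod_cast mem_range.1 hx⟩

theorem sum_range_sub_eq_mul {φ : ℤ → ℤ} {L : ℕ} {M : ℤ} (hφ : ∀ z, φ (z + L) = φ z + M)
    (a : ℤ) : ∑ x ∈ range L, (φ (x + a) - φ x) = M * a := by
  have hstep : ∀ c, ∑ x ∈ range L, (φ (x + (c + 1)) - φ x) =
      ∑ x ∈ range L, (φ (x + c) - φ x) + M := fun c => by
    have h := sum_range_sub (fun k : ℕ => φ (k + c)) L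
    simp only [Nat.cast_add, Nat.cast_one, Nat.cast_zero, zero_add] at h
    rw [add_comm (L : ℤ), hφ, add_sub_cancel_left] at h
    rw [← h, ← sum_add_distrib]
    refine sum_congr rfl fun x _ => ?_
    rw [add_right_comm, add_assoc]
    ring
  induction a using Int.induction_on with
  | zero => simp
  | succ i ih => rw [hstep, ih]; ring
  | pred i ih =>
    have h := hstep (-i - 1)
    rw [sub_add_cancel] at h
    linarith

/-- The number of pairs `(q, q + v)` of lattice points in the strip `[0, L) × ℤ` with `q` on or
below the graph of `φ` and `q + v` strictly above it, counted column by column. -/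
def stripCount (φ : ℤ → ℤ) (L : ℕ) (v : ℤ × ℤ) : ℕ :=
  ∑ x ∈ range L with 0 ≤ ((x : ℕ) : ℤ) + v.1 ∧ (x : ℤ) + v.1 < L, (v.2 + φ x - φ (x + v.1)).toNat

theorem sum_sum_tsum_tsum_eq_tsum_stripCount (φ : ℤ → ℤ) (L : ℕ) {F : ℤ × ℤ → ℝ}
    (hF : Summable fun v : ℤ × ℤ => ‖F v‖ * (|(v.2 : ℝ)| + 1)) :
    ∑ x₁ ∈ range L, ∑ x₂ ∈ range L, ∑' y₁ : ℤ, ∑' y₂ : ℤ,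
      (if φ x₁ < y₁ ∧ y₂ ≤ φ x₂ then F ((x₁ : ℤ) - x₂, y₁ - y₂) else 0) =
    ∑' v, stripCount φ L v * F v := by
  set T : ℕ → ℕ → ℤ × ℤ → ℝ := fun x₁ x₂ v =>
    if v.1 = x₁ - x₂ then (v.2 + φ x₂ - φ x₁).toNat * F v else 0
  have hrow : ∀ a : ℤ, Summable fun b : ℤ => ‖F (a, b)‖ * (|(b : ℝ)| + 1) :=
    fun a => hF.comp_injective (Prod.mk_right_injective a)
  have hinner : ∀ x₁ x₂ : ℕ, ∑' y₁ : ℤ, ∑' y₂ : ℤ,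
      (if φ x₁ < y₁ ∧ y₂ ≤ φ x₂ then F ((x₁ : ℤ) - x₂, y₁ - y₂) else 0) = ∑' v, T x₁ x₂ v :=
    fun x₁ x₂ => by
      rw [tsum_tsum_ite_lt_le_sub (hrow _), tsum_ite_fst_eq]
  have hT : ∀ x₁ x₂, Summable (T x₁ x₂) := fun x₁ x₂ => by
    refine .of_norm_bounded (hF.mul_left (|((φ x₂ - φ x₁ : ℤ) : ℝ)| + 1)) fun v => ?_
    simp only [T]
    split_ifs
    · rw [norm_mul, Real.norm_natCast, add_sub_assoc, mul_comm, mul_left_comm]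
      exact mul_le_mul_of_nonneg_left (toNat_add_le_mul _ _) (norm_nonneg _)
    · rw [norm_zero]; positivity
  have hcount : ∀ v, ∑ x₁ ∈ range L, ∑ x₂ ∈ range L, T x₁ x₂ v = stripCount φ L v * F v := by
    intro v
    have hiff : ∀ x₁ x₂ : ℕ, v.1 = x₁ - x₂ ↔ (x₁ : ℤ) = x₂ + v.1 := fun _ _ => by omega
    simp only [T, stripCount, hiff]
    rw [sum_comm, sum_filter, Nat.cast_sum, sum_mul]
    refine sum_congr rfl fun x₂ _ => ?_
    rw [sum_range_ite_natCast_eq L (fun x₁ => (v.2 + φ x₂ - φ x₁).toNat * F v)]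
    split_ifs <;> simp
  calc _ = ∑ x₁ ∈ range L, ∑ x₂ ∈ range L, ∑' v, T x₁ x₂ v := by simp only [hinner]
    _ = ∑' v, ∑ x₁ ∈ range L, ∑ x₂ ∈ range L, T x₁ x₂ v := by
      rw [Summable.tsum_finsetSum fun x₁ _ => summable_sum fun x₂ _ => hT x₁ x₂]
      exact sum_congr rfl fun x₁ _ => (Summable.tsum_finsetSum fun x₂ _ => hT x₁ x₂).symm
    _ = _ := tsum_congr hcount

theorem card_filter_not_window_le (L : ℕ) (a : ℤ) :
    #{x ∈ range L | ¬(0 ≤ ((x : ℕ) : ℤ) + a ∧ (x : ℤ) + a < L)} ≤ 2 * a.natAbs := by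
  calc _ ≤ #(range a.natAbs ∪ Ico (L - a.natAbs) L) := card_le_card fun x hx => by
        simp only [mem_filter, mem_range, mem_union, mem_Ico] at hx ⊢
        omega
    _ ≤ 2 * a.natAbs := by
        refine (card_union_le _ _).trans ?_
        rw [card_range, Nat.card_Ico]
        omega

theorem sum_range_le_stripCount_add {φ : ℤ → ℤ} {L B : ℕ} {v : ℤ × ℤ}
    (hB : ∀ x : ℤ, (v.2 + φ x - φ (x + v.1)).toNat ≤ B) :
    ∑ x ∈ range L, (v.2 + φ x - φ (x + v.1)).toNat ≤ stripCount φ L v + 2 * v.1.natAbs * B := by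
  rw [← sum_filter_add_sum_filter_not (range L) fun x : ℕ => 0 ≤ (x : ℤ) + v.1 ∧ (x : ℤ) + v.1 < L]
  refine add_le_add le_rfl ((sum_le_card_nsmul _ (fun x : ℕ => (v.2 + φ x - φ (x + v.1)).toNat) B
    fun x _ => hB x).trans ?_)
  rw [smul_eq_mul]
  exact Nat.mul_le_mul_right B (card_filter_not_window_le L v.1)

def floorProfile (s : ℝ) (z : ℤ) : ℤ := ⌊s * z⌋

section FloorProfile

variable (s : ℝ)

theorem toNat_floorProfile_sub (x a b : ℤ) :
    ((b + floorProfile s x - floorProfile s (x + a)).toNat : ℤ) =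
      if s * a < b then b + floorProfile s x - floorProfile s (x + a) else 0 := by
  unfold floorProfile
  split_ifs with h
  · have : ⌊s * ↑(x + a)⌋ ≤ ⌊s * x + b⌋ := Int.floor_le_floor (by push_cast; linarith)
    rw [Int.floor_add_intCast] at this
    exact Int.toNat_of_nonneg (by linarith)
  · have : ⌊s * x + b⌋ ≤ ⌊s * ↑(x + a)⌋ := Int.floor_le_floor (by push_cast; linarith)
    rw [Int.floor_add_intCast] at this
    rw [Int.toNat_eq_zero.2 (by linarith), Int.natCast_zero]

theorem toNat_floorProfile_sub_le (x a b : ℤ) :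
    (b + floorProfile s x - floorProfile s (x + a)).toNat ≤ (b - ⌊s * a⌋).toNat := by
  refine Int.toNat_le_toNat ?_
  have : ⌊s * x⌋ + ⌊s * a⌋ ≤ ⌊s * ↑(x + a)⌋ := by
    rw [Int.cast_add, mul_add]; exact Int.le_floor_add _ _
  unfold floorProfile
  linarith

theorem sum_toNat_floorProfile_sub {L : ℕ} {M : ℤ} (hsL : s * L = M) (a b : ℤ) :
    ((∑ x ∈ range L, (b + floorProfile s x - floorProfile s (x + a)).toNat : ℕ) : ℝ) =
      L * max (b - s * a) 0 := by
  have hφ : ∀ z : ℤ, floorProfile s (z + L) = floorProfile s z + M := fun z => by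
    rw [floorProfile, Int.cast_add, mul_add, Int.cast_natCast, hsL, Int.floor_add_intCast]; rfl
  have hZ : ((∑ x ∈ range L, (b + floorProfile s x - floorProfile s (x + a)).toNat : ℕ) : ℤ) =
      if s * a < b then L * b - M * a else 0 := by
    push_cast
    simp only [toNat_floorProfile_sub]
    split_ifs
    · have h := sum_range_sub_eq_mul hφ a
      rw [sum_sub_distrib] at h
      rw [sum_sub_distrib, sum_add_distrib, sum_const, card_range, nsmul_eq_mul]
      linarith
    · simp
  rw [← Int.cast_natCast, hZ]
  split_ifs with h
  · rw [max_eq_left (by linarith)]; push_cast; rw [← hsL]; ring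
  · rw [max_eq_right (by linarith)]; simp

variable {s} {n : ℕ} {m : ℤ}

theorem stripCount_floorProfile_div_le (hs : s * n = m) (R : ℕ) (v : ℤ × ℤ) :
    (stripCount (floorProfile s) (R * n) v : ℝ) / R ≤ n * max (v.2 - s * v.1) 0 := by
  have h := sum_toNat_floorProfile_sub s (L := R * n) (M := R * m) (by push_cast; rw [← hs]; ring)
    v.1 v.2
  refine div_le_of_le_mul₀ R.cast_nonneg (by positivity) ?_
  rw [mul_right_comm, ← Nat.cast_mul, mul_comm n R, ← h]
  exact_mod_cast sum_le_sum_of_subset (filter_subset _ _)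

theorem tendsto_stripCount_floorProfile_div (hs : s * n = m) (v : ℤ × ℤ) :
    Tendsto (fun R : ℕ => (stripCount (floorProfile s) (R * n) v : ℝ) / R) atTop
      (𝓝 (n * max (v.2 - s * v.1) 0)) := by
  obtain ⟨C, hwindow⟩ : ∃ C : ℝ, ∀ R : ℕ, (R : ℝ) * (n * max (v.2 - s * v.1) 0) ≤
      stripCount (floorProfile s) (R * n) v + C :=
    ⟨(2 * v.1.natAbs * (v.2 - ⌊s * v.1⌋).toNat : ℕ), fun R => by
    have h := sum_toNat_floorProfile_sub s (L := R * n) (M := R * m) (by push_cast; rw [← hs]; ring)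
      v.1 v.2
    rw [Nat.cast_mul, mul_assoc] at h
    rw [← h]
    exact_mod_cast sum_range_le_stripCount_add (L := R * n) fun x =>
      toNat_floorProfile_sub_le s x v.1 v.2⟩
  have hlower : Tendsto (fun R : ℕ => n * max (v.2 - s * v.1) 0 - C / R) atTop
      (𝓝 (n * max (v.2 - s * v.1) 0)) := by
    simpa using tendsto_const_nhds.sub (tendsto_const_div_atTop_nhds_zero_nat C)
  refine tendsto_of_tendsto_of_tendsto_of_le_of_le' hlower tendsto_const_nhds ?_ ?_
  · filter_upwards [eventually_gt_atTop 0] with R hR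
    rw [sub_le_iff_le_add, ← add_div, le_div_iff₀ (by positivity), mul_comm]
    exact hwindow R
  · exact .of_forall fun R => stripCount_floorProfile_div_le hs R v

theorem max_sub_mul_le_mul_sqrt_add_one (s a b : ℝ) :
    max (b - s * a) 0 ≤ (1 + |s|) * (√(a ^ 2 + b ^ 2) + 1) := by
  have ha : |a| ≤ √(a ^ 2 + b ^ 2) := Real.abs_le_sqrt (le_add_of_nonneg_right (sq_nonneg b))
  have hb : |b| ≤ √(a ^ 2 + b ^ 2) := Real.abs_le_sqrt (le_add_of_nonneg_left (sq_nonneg a))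
  have hsa : |s| * |a| ≤ |s| * √(a ^ 2 + b ^ 2) := mul_le_mul_of_nonneg_left ha (abs_nonneg s)
  have hlin : b - s * a ≤ |b| + |s| * |a| := by
    rw [← abs_mul]; linarith [le_abs_self b, neg_abs_le (s * a)]
  refine max_le ?_ (by positivity)
  nlinarith [abs_nonneg s, Real.sqrt_nonneg (a ^ 2 + b ^ 2)]

theorem stripCount_floorProfile_div_le_mul_sqrt (hs : s * n = m) (R : ℕ) (v : ℤ × ℤ) :
    (stripCount (floorProfile s) (R * n) v : ℝ) / R ≤
      n * (1 + |s|) * (√((v.1 : ℝ) ^ 2 + (v.2 : ℝ) ^ 2) + 1) := by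
  rw [mul_assoc]
  exact (stripCount_floorProfile_div_le hs R v).trans
    (mul_le_mul_of_nonneg_left (max_sub_mul_le_mul_sqrt_add_one s _ _) n.cast_nonneg)

end FloorProfile

theorem distToGraph_eq {m n : ℕ} (hn : n ≠ 0) (p : ℤ × ℤ) :
    distToGraph m n p = |(n : ℝ) * p.2 - m * p.1| / √((n : ℝ) ^ 2 + (m : ℝ) ^ 2) := by
  obtain ⟨a, b⟩ := p
  set c : ℝ := (m : ℝ) / n
  have hc : (0 : ℝ) < 1 + c ^ 2 := by positivity
  have hmin : IsLeast (Set.range fun t : ℝ => √((a - t) ^ 2 + (b - c * t) ^ 2))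
      (√((b - c * a) ^ 2 / (1 + c ^ 2))) := by
    refine ⟨⟨(a + c * b) / (1 + c ^ 2), ?_⟩, ?_⟩
    · dsimp only
      congr 1
      field_simp
      ring
    · rintro _ ⟨t, rfl⟩
      refine Real.sqrt_le_sqrt ?_
      rw [div_le_iff₀ hc]
      nlinarith [sq_nonneg ((1 + c ^ 2) * t - (a + c * b))]
  rw [distToGraph, hmin.csInf_eq, ← Real.sqrt_sq_eq_abs, ← Real.sqrt_div' _ (by positivity)]
  congr 1
  simp only [c]
  field_simp

theorem sqrt_mul_ite_distToGraph {m n : ℕ} (hn : n ≠ 0) (p : ℤ × ℤ) :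
    √((n : ℝ) ^ 2 + (m : ℝ) ^ 2) *
        (if (m : ℝ) / n * p.1 < p.2 then distToGraph m n p else 0) =
      n * max (p.2 - (m : ℝ) / n * p.1) 0 := by
  split_ifs with h
  · have hm : (m : ℝ) = n * (m / n) := (mul_div_cancel₀ _ (Nat.cast_ne_zero.2 hn)).symm
    rw [distToGraph_eq hn, max_eq_left (sub_nonneg.2 h.le), mul_div_cancel₀ _ (by positivity),
      abs_of_pos (by rw [hm, mul_assoc, ← mul_sub]; exact mul_pos (by positivity) (sub_pos.2 h)),
      mul_sub, ← mul_assoc, ← hm]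
  · rw [max_eq_right (by linarith), mul_zero, mul_zero]

theorem vertical_strip_boundary_form_general
    (m n : ℕ) (hn : 0 < n)
    (F : ℤ × ℤ → ℝ)
    (hF : Summable fun v : ℤ × ℤ =>
      F v * (Real.sqrt ((v.1 : ℝ) ^ 2 + (v.2 : ℝ) ^ 2) + 1)) :
    Tendsto
      (fun R : ℕ =>
        (1 / (R : ℝ)) *
          ∑ x₁ ∈ Finset.range (R * n), ∑ x₂ ∈ Finset.range (R * n),
            ∑' y₁ : ℤ, ∑' y₂ : ℤ,
              if (m : ℝ) / n * (x₁ : ℝ) < (y₁ : ℝ) ∧ (y₂ : ℝ) ≤ (m : ℝ) / n * (x₂ : ℝ)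
              then F ((x₁ : ℤ) - (x₂ : ℤ), y₁ - y₂) else 0)
      atTop
      (𝓝 (Real.sqrt ((n : ℝ) ^ 2 + (m : ℝ) ^ 2) *
        ∑' p : ℤ × ℤ,
          if (m : ℝ) / n * (p.1 : ℝ) < (p.2 : ℝ) then distToGraph m n p * F p else 0)) := by
  set s : ℝ := m / n
  have hs : s * n = (m : ℤ) := by simp [s, hn.ne']
  have hFnorm : Summable fun v : ℤ × ℤ => ‖F v‖ * (√((v.1 : ℝ) ^ 2 + (v.2 : ℝ) ^ 2) + 1) := by
    simpa [norm_mul, abs_of_nonneg (add_nonneg (Real.sqrt_nonneg _) zero_le_one)] using hF.norm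
  have hFsnd : Summable fun v : ℤ × ℤ => ‖F v‖ * (|(v.2 : ℝ)| + 1) :=
    hFnorm.of_nonneg_of_le (fun _ => by positivity) fun v => mul_le_mul_of_nonneg_left
      (add_le_add_left (Real.abs_le_sqrt (le_add_of_nonneg_left (sq_nonneg _))) 1) (norm_nonneg _)
  rw [← tsum_mul_left]
  refine (tendsto_tsum_of_dominated_convergence
    (f := fun R v => (stripCount (floorProfile s) (R * n) v : ℝ) / R * F v)
    (hFnorm.mul_left (n * (1 + |s|))) (fun v => ?_) (.of_forall fun R v => ?_)).congr fun R => ?_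
  · rw [← ite_zero_mul, ← mul_assoc, sqrt_mul_ite_distToGraph hn.ne']
    exact (tendsto_stripCount_floorProfile_div hs v).mul_const (F v)
  · have h := mul_le_mul_of_nonneg_right (stripCount_floorProfile_div_le_mul_sqrt hs R v)
      (norm_nonneg (F v))
    rw [norm_mul, Real.norm_of_nonneg (by positivity)]
    linarith
  · rw [tsum_congr fun v => div_mul_eq_mul_div .., tsum_congr fun v => div_eq_inv_mul ..,
      tsum_mul_left, ← sum_sum_tsum_tsum_eq_tsum_stripCount _ _ hFsnd, one_div]
    simp only [floorProfile, Int.floor_lt, Int.le_floor, Int.cast_natCast]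

/-- vertical strip case of the asymptotic boundary form:
the normalized sums converge to
`√(n²+m²) · Σ_{(x,y)∈ℤ², y > (m/n)x} dist((x,y),G)·F(x,y)`. -/
theorem vertical_strip_boundary_form
    (m n : ℕ) (hn : 0 < n) (hmn : m ≤ n) (hcop : Nat.Coprime m n)
    (F : ℤ × ℤ → ℝ) (hF0 : ∀ v, 0 ≤ F v)
    (hF : Summable fun v : ℤ × ℤ =>
      F v * (Real.sqrt ((v.1 : ℝ) ^ 2 + (v.2 : ℝ) ^ 2) + 1)) :
    Tendsto
      (fun R : ℕ =>
        (1 / (R : ℝ)) *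
          ∑ x₁ ∈ Finset.range (R * n), ∑ x₂ ∈ Finset.range (R * n),
            ∑' y₁ : ℤ, ∑' y₂ : ℤ,
              if (m : ℝ) / n * (x₁ : ℝ) < (y₁ : ℝ) ∧ (y₂ : ℝ) ≤ (m : ℝ) / n * (x₂ : ℝ)
              then F ((x₁ : ℤ) - (x₂ : ℤ), y₁ - y₂) else 0)
      atTop
      (𝓝 (Real.sqrt ((n : ℝ) ^ 2 + (m : ℝ) ^ 2) *
        ∑' p : ℤ × ℤ,
          if (m : ℝ) / n * (p.1 : ℝ) < (p.2 : ℝ) then distToGraph m n p * F p else 0)) :=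
  vertical_strip_boundary_form_general m n hn F hF
end
end

section
/- Let m,n be relatively prime integers with n > 0 and 0 ≤ m ≤ n, and let F : ℤ² → [0,∞] be arbitrary. Define R_t(s) = ⌊(m/n)(t+s)+1⌋ − ⌊(m/n)s⌋ for s ∈ {0,…,n−t−1} and R_t(s) = m + ⌊(m/n)(s−(n−t))+1⌋ − ⌊(m/n)s⌋ for s ∈ {n−t,…,n−1}. Then Σ_{t=0}^{n−1} Σ_{s=0}^{n−1} Σ_{k∈ℤ} Σ_{i=0}^{∞} (i+1) · F(kn+t, km+R_t(s)+i) = √(n²+m²) · Σ_{(x,y)∈ℤ², y > (m/n)x} dist((x,y), G) · F(x,y), where G = {(t,(m/n)t) : t ∈ ℝ} and dist is the Euclidean distance from a point to this line (both sides are sums of nonnegative terms, possibly infinite). -/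
/-!
Split `ℤ²` into the columns `x = k * n + t` with `0 ≤ t < n`. In such a column the lattice points
strictly above the line are those with `y ≥ b := k * m + ⌊m t / n⌋ + 1`, every `k * m + R_t(s)`
is `b` or `b + 1`, and `∑ₛ R_t(s) = m t + n` because `s ↦ ⌊m s / n⌋` grows by `m` over a period.
So the point `(x, y)` is counted `∑ₛ (y + 1 - k m - R_t(s))₊ = (n y - m x)₊` times on the left,
and `n y - m x` is `√(n² + m²)` times the Euclidean distance from `(x, y)` to the line.
-/

open ENNReal

noncomputable section

theorem Finset.sum_range_add_of_add_period {M : Type*} [AddCancelCommMonoid M] {f : ℕ → M}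
    {n : ℕ} {c : M} (hf : ∀ s, f (s + n) = f s + c) (t : ℕ) :
    ∑ s ∈ Finset.range n, f (s + t) = ∑ s ∈ Finset.range n, f s + t • c := by
  induction t with
  | zero => simp
  | succ t ih =>
    have shift := (Finset.sum_range_succ' (fun s => f (s + t)) n).symm.trans
      (Finset.sum_range_succ (fun s => f (s + t)) n)
    rw [zero_add, Nat.add_comm n t, hf, add_comm (f t) c, ← add_assoc, add_left_inj (f t)] at shift
    simp_rw [← Nat.add_assoc, Nat.add_right_comm _ t 1, shift, ih, succ_nsmul, add_assoc]

theorem Finset.sum_toNat_add_one_sub_of_mem_Icc {ι : Type*} (s : Finset ι) (c : ι → ℤ) {b : ℤ}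
    (hc : ∀ i ∈ s, c i ∈ Set.Icc b (b + 1)) (y : ℤ) :
    ∑ i ∈ s, (y + 1 - c i).toNat = (s.card * (y + 1) - ∑ i ∈ s, c i).toNat := by
  rcases le_or_gt b y with hby | hyb
  · have hterm : ∀ i ∈ s, ((y + 1 - c i).toNat : ℤ) = y + 1 - c i := fun i hi =>
      Int.toNat_of_nonneg (by linarith [(hc i hi).2])
    zify
    rw [Finset.sum_congr rfl hterm, Finset.sum_sub_distrib, Finset.sum_const, nsmul_eq_mul,
      Int.toNat_of_nonneg]
    rw [sub_nonneg, ← nsmul_eq_mul, ← Finset.sum_const]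
    exact Finset.sum_le_sum fun i hi => by linarith [(hc i hi).2]
  · have hlow : s.card * (y + 1) ≤ ∑ i ∈ s, c i := by
      rw [← nsmul_eq_mul, ← Finset.sum_const]
      exact Finset.sum_le_sum fun i hi => by linarith [(hc i hi).1]
    rw [Int.toNat_of_nonpos (by linarith)]
    exact Finset.sum_eq_zero fun i hi => Int.toNat_of_nonpos (by linarith [(hc i hi).1])

theorem ENNReal.tsum_succ_mul_add_eq_tsum_toNat_mul (G : ℤ → ℝ≥0∞) (c : ℤ) :
    ∑' i : ℕ, ((i : ℝ≥0∞) + 1) * G (c + i) = ∑' y : ℤ, ((y + 1 - c).toNat : ℝ≥0∞) * G y := by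
  have hinj : Function.Injective fun i : ℕ => c + i := fun i j hij => by simpa using hij
  rw [← hinj.tsum_eq]
  · refine tsum_congr fun i => ?_
    rw [show c + (i : ℤ) + 1 - c = ((i + 1 : ℕ) : ℤ) by push_cast; ring, Int.toNat_natCast]
    push_cast
    rfl
  · intro y hy
    have hcy : c ≤ y := by
      by_contra! h
      exact hy (by simp only [Int.toNat_of_nonpos (by omega : y + 1 - c ≤ 0)]; simp)
    exact ⟨(y - c).toNat, by simp only; omega⟩

theorem ENNReal.sum_range_tsum_mul_add_eq_tsum (n : ℕ) [NeZero n] (f : ℤ → ℝ≥0∞) :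
    ∑ t ∈ Finset.range n, ∑' k : ℤ, f (k * n + t) = ∑' x : ℤ, f x := by
  calc ∑ t ∈ Finset.range n, ∑' k : ℤ, f (k * n + t)
      = ∑' k : ℤ, ∑ t ∈ Finset.range n, f (k * n + t) :=
        (Summable.tsum_finsetSum fun _ _ => ENNReal.summable).symm
    _ = ∑' q : ℤ × Fin n, f ((Int.divModEquiv n).symm q) := by
        rw [ENNReal.tsum_prod']
        refine tsum_congr fun k => ?_
        rw [tsum_fintype, ← Fin.sum_univ_eq_sum_range (fun t => f (k * n + t))]
        simp only [Int.divModEquiv_symm_apply]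
    _ = ∑' x : ℤ, f x := (Int.divModEquiv n).symm.tsum_eq f

theorem sInf_range_sqrt_sq_sub_add_sq_sub_mul (c x y : ℝ) :
    sInf (Set.range fun t : ℝ => √((x - t) ^ 2 + (y - c * t) ^ 2))
      = √((y - c * x) ^ 2 / (1 + c ^ 2)) := by
  have hc : 0 < 1 + c ^ 2 := by positivity
  set t₀ := (x + c * y) / (1 + c ^ 2)
  -- completing the square in `t` around the foot of the perpendicular `t₀`
  have hsq : ∀ t : ℝ, (x - t) ^ 2 + (y - c * t) ^ 2
      = (y - c * x) ^ 2 / (1 + c ^ 2) + (1 + c ^ 2) * (t - t₀) ^ 2 := fun t => by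
    simp only [t₀]
    field_simp
    ring
  refine IsLeast.csInf_eq ⟨⟨t₀, by simp only [hsq, sub_self]; ring_nf⟩, ?_⟩
  rintro _ ⟨t, rfl⟩
  exact Real.sqrt_le_sqrt (by rw [hsq]; nlinarith [sq_nonneg (t - t₀)])

theorem sqrt_mul_distToGraph {m n : ℕ} (hn : 0 < n) (p : ℤ × ℤ) :
    √((n : ℝ) ^ 2 + (m : ℝ) ^ 2) * distToGraph m n p = |(n : ℝ) * p.2 - m * p.1| := by
  have hn' : (0 : ℝ) < n := by exact_mod_cast hn
  rw [distToGraph, sInf_range_sqrt_sq_sub_add_sq_sub_mul, ← Real.sqrt_mul (by positivity),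
    ← Real.sqrt_sq_eq_abs]
  congr 1
  field_simp

theorem ofReal_sqrt_mul_ite_distToGraph {m n : ℕ} (hn : 0 < n) (F : ℤ × ℤ → ℝ≥0∞) (p : ℤ × ℤ) :
    ENNReal.ofReal √((n : ℝ) ^ 2 + (m : ℝ) ^ 2) *
        (if (m : ℝ) / n * (p.1 : ℝ) < (p.2 : ℝ) then ENNReal.ofReal (distToGraph m n p) * F p
          else 0)
      = ((n * p.2 - m * p.1).toNat : ℝ≥0∞) * F p := by
  have hn' : (0 : ℝ) < n := by exact_mod_cast hn
  have habove : (m : ℝ) / n * p.1 < p.2 ↔ (m : ℤ) * p.1 < n * p.2 := by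
    rw [div_mul_eq_mul_div, div_lt_iff₀ hn', mul_comm (p.2 : ℝ)]
    exact_mod_cast Iff.rfl
  split_ifs with h
  · have hpos : 0 < (n : ℤ) * p.2 - m * p.1 := sub_pos.mpr (habove.mp h)
    have hdist : |(n : ℝ) * p.2 - m * p.1| = ((n * p.2 - m * p.1 : ℤ).toNat : ℝ) := by
      rw [abs_of_pos (by exact_mod_cast hpos)]
      exact_mod_cast (Int.toNat_of_nonneg hpos.le).symm
    rw [← mul_assoc, ← ENNReal.ofReal_mul (Real.sqrt_nonneg _), sqrt_mul_distToGraph hn, hdist,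
      ENNReal.ofReal_natCast]
  · rw [Int.toNat_of_nonpos (by linarith [habove.not.mp h]), mul_zero, Nat.cast_zero, zero_mul]

section FloorRise

variable {m n : ℕ}

-- The paper's `R_t(s)`: both of its defining cases reduce to this one formula.
def floorRise (m n t s : ℕ) : ℤ :=
  ⌊(m : ℚ) * ((s + t : ℕ) : ℚ) / n⌋ - ⌊(m : ℚ) * s / n⌋ + 1

theorem floorRise_eq_floor_add_one (t s : ℕ) :
    floorRise m n t s = ⌊(m : ℚ) * ((t : ℚ) + (s : ℚ)) / n + 1⌋ - ⌊(m : ℚ) * (s : ℚ) / n⌋ := by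
  rw [floorRise, Int.floor_add_one, Nat.cast_add, add_comm (s : ℚ)]
  ring

theorem floorRise_eq_add_floor_sub_add_one (hn : 0 < n) (t s : ℕ) :
    floorRise m n t s = m + ⌊(m : ℚ) * ((s : ℚ) - ((n : ℚ) - (t : ℚ))) / n + 1⌋ -
      ⌊(m : ℚ) * (s : ℚ) / n⌋ := by
  have hn' : (n : ℚ) ≠ 0 := by exact_mod_cast hn.ne'
  have hshift : (m : ℚ) * ((s : ℚ) - ((n : ℚ) - (t : ℚ))) / n + 1
      = (m : ℚ) * ((s + t : ℕ) : ℚ) / n + 1 - (m : ℕ) := by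
    push_cast
    field_simp
    ring
  rw [hshift, Int.floor_sub_natCast, Int.floor_add_one, floorRise]
  ring

theorem floorRise_mem_Icc (t s : ℕ) :
    floorRise m n t s ∈ Set.Icc (⌊(m : ℚ) * t / n⌋ + 1) (⌊(m : ℚ) * t / n⌋ + 2) := by
  have hsplit : (m : ℚ) * ((s + t : ℕ) : ℚ) / n = (m : ℚ) * s / n + (m : ℚ) * t / n := by
    push_cast
    ring
  have hlow := Int.le_floor_add ((m : ℚ) * s / n) ((m : ℚ) * t / n)
  have hhigh := Int.le_floor_add_floor ((m : ℚ) * s / n) ((m : ℚ) * t / n)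
  rw [floorRise, hsplit]
  constructor <;> linarith

theorem sum_range_floorRise (hn : 0 < n) (t : ℕ) :
    ∑ s ∈ Finset.range n, floorRise m n t s = m * t + n := by
  have hperiod : ∀ s : ℕ, ⌊(m : ℚ) * ((s + n : ℕ) : ℚ) / n⌋ = ⌊(m : ℚ) * s / n⌋ + m := by
    intro s
    have hn' : (n : ℚ) ≠ 0 := by exact_mod_cast hn.ne'
    rw [show (m : ℚ) * ((s + n : ℕ) : ℚ) / n = (m : ℚ) * s / n + (m : ℕ) by
      push_cast; field_simp, Int.floor_add_natCast]
  simp only [floorRise, Finset.sum_add_distrib, Finset.sum_sub_distrib,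
    Finset.sum_range_add_of_add_period (f := fun s : ℕ => ⌊(m : ℚ) * s / n⌋) hperiod t]
  simp [mul_comm]

theorem sum_range_tsum_succ_mul_floorRise (hn : 0 < n) (G : ℤ → ℝ≥0∞) (t : ℕ) (k : ℤ) :
    ∑ s ∈ Finset.range n, ∑' i : ℕ, ((i : ℝ≥0∞) + 1) * G (k * m + floorRise m n t s + i)
      = ∑' y : ℤ, ((n * y - m * (k * n + t)).toNat : ℝ≥0∞) * G y := by
  have hmem : ∀ s ∈ Finset.range n, k * m + floorRise m n t s ∈
      Set.Icc (k * m + ⌊(m : ℚ) * t / n⌋ + 1) (k * m + ⌊(m : ℚ) * t / n⌋ + 1 + 1) :=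
    fun s _ => by
      have := floorRise_mem_Icc (m := m) (n := n) t s
      constructor <;> linarith [this.1, this.2]
  simp_rw [ENNReal.tsum_succ_mul_add_eq_tsum_toNat_mul]
  rw [← Summable.tsum_finsetSum fun _ _ => ENNReal.summable]
  refine tsum_congr fun y => ?_
  rw [← Finset.sum_mul, ← Nat.cast_sum, Finset.sum_toNat_add_one_sub_of_mem_Icc _ _ hmem,
    Finset.sum_add_distrib, sum_range_floorRise hn]
  congr 3
  simp only [Finset.sum_const, Finset.card_range, nsmul_eq_mul]
  ring

end FloorRise

theorem strip_limit_eq_geometric_boundary_form_general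
    (m n : ℕ) (hn : 0 < n)
    (F : ℤ × ℤ → ℝ≥0∞)
    (Rt : ℕ → ℕ → ℤ)
    (hRt1 : ∀ t s : ℕ, t < n → s + t + 1 ≤ n →
      Rt t s = ⌊(m : ℚ) * ((t : ℚ) + (s : ℚ)) / n + 1⌋ - ⌊(m : ℚ) * (s : ℚ) / n⌋)
    (hRt2 : ∀ t s : ℕ, t < n → s < n → n ≤ s + t →
      Rt t s = m + ⌊(m : ℚ) * ((s : ℚ) - ((n : ℚ) - (t : ℚ))) / n + 1⌋ -
        ⌊(m : ℚ) * (s : ℚ) / n⌋) :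
    ∑ t ∈ Finset.range n, ∑ s ∈ Finset.range n,
        ∑' k : ℤ, ∑' i : ℕ,
          ((i : ℝ≥0∞) + 1) * F (k * (n : ℤ) + (t : ℤ), k * (m : ℤ) + Rt t s + (i : ℤ)) =
      ENNReal.ofReal (Real.sqrt ((n : ℝ) ^ 2 + (m : ℝ) ^ 2)) *
        ∑' p : ℤ × ℤ,
          if (m : ℝ) / n * (p.1 : ℝ) < (p.2 : ℝ)
          then ENNReal.ofReal (distToGraph m n p) * F p else 0 := by
  have : NeZero n := ⟨hn.ne'⟩
  have hRt : ∀ t ∈ Finset.range n, ∀ s ∈ Finset.range n, Rt t s = floorRise m n t s := by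
    intro t ht s hs
    rw [Finset.mem_range] at ht hs
    rcases lt_or_ge (s + t) n with h | h
    · rw [hRt1 t s ht h, floorRise_eq_floor_add_one]
    · rw [hRt2 t s ht hs h, floorRise_eq_add_floor_sub_add_one hn]
  calc _ = ∑ t ∈ Finset.range n, ∑' k : ℤ, ∑' y : ℤ,
          ((n * y - m * (k * n + t)).toNat : ℝ≥0∞) * F (k * n + t, y) := by
        refine Finset.sum_congr rfl fun t ht => ?_
        rw [← Summable.tsum_finsetSum fun _ _ => ENNReal.summable]
        refine tsum_congr fun k => ?_
        rw [← sum_range_tsum_succ_mul_floorRise hn (fun y => F (k * n + t, y))]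
        exact Finset.sum_congr rfl fun s hs => by rw [hRt t ht s hs]
    _ = ∑' x : ℤ, ∑' y : ℤ, ((n * y - m * x).toNat : ℝ≥0∞) * F (x, y) :=
        ENNReal.sum_range_tsum_mul_add_eq_tsum n
          fun x => ∑' y : ℤ, ((n * y - m * x).toNat : ℝ≥0∞) * F (x, y)
    _ = _ := by
        rw [← ENNReal.tsum_mul_left, ENNReal.tsum_prod']
        exact tsum_congr fun x => tsum_congr fun y =>
          (ofReal_sqrt_mul_ite_distToGraph hn F (x, y)).symm

/-- the limit form of the normalized projection functional over a
vertical strip, written with the lattice-slope function `R_t`, equals the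
boundary form `√(n²+m²) · Σ_{(x,y)∈ℤ², y>(m/n)x} dist((x,y),G)·F(x,y)`. -/
theorem strip_limit_eq_geometric_boundary_form
    (m n : ℕ) (hn : 0 < n) (hmn : m ≤ n) (hcop : Nat.Coprime m n)
    (F : ℤ × ℤ → ℝ≥0∞)
    (Rt : ℕ → ℕ → ℤ)
    (hRt1 : ∀ t s : ℕ, t < n → s + t + 1 ≤ n →
      Rt t s = ⌊(m : ℚ) * ((t : ℚ) + (s : ℚ)) / n + 1⌋ - ⌊(m : ℚ) * (s : ℚ) / n⌋)
    (hRt2 : ∀ t s : ℕ, t < n → s < n → n ≤ s + t →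
      Rt t s = m + ⌊(m : ℚ) * ((s : ℚ) - ((n : ℚ) - (t : ℚ))) / n + 1⌋ -
        ⌊(m : ℚ) * (s : ℚ) / n⌋) :
    ∑ t ∈ Finset.range n, ∑ s ∈ Finset.range n,
        ∑' k : ℤ, ∑' i : ℕ,
          ((i : ℝ≥0∞) + 1) * F (k * (n : ℤ) + (t : ℤ), k * (m : ℤ) + Rt t s + (i : ℤ)) =
      ENNReal.ofReal (Real.sqrt ((n : ℝ) ^ 2 + (m : ℝ) ^ 2)) *
        ∑' p : ℤ × ℤ,
          if (m : ℝ) / n * (p.1 : ℝ) < (p.2 : ℝ)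
          then ENNReal.ofReal (distToGraph m n p) * F p else 0 :=
  strip_limit_eq_geometric_boundary_form_general m n hn F Rt hRt1 hRt2
end
end

section
/- Let n ≥ 1 be an integer, let r, s be integers with r > 0 and s < 0, and let F : ℤ² → [0,∞) satisfy Σ_{(x,y)∈ℤ²} F(x,y)(|y|+1) < ∞. Then lim_{R→∞, R∈ℕ} (1/R) · Σ_{x₁=0}^{Rn−1} Σ_{x₂=0}^{Rn−1} Σ_{y₁∈ℤ, y₁ > rR} Σ_{y₂∈ℤ, y₂ ≤ sR} F(x₁−x₂, y₁−y₂) = 0. -/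
/-!
For a fixed horizontal offset `a`, a vertical difference `d = y₁ - y₂` is realised by exactly
`(d - (r - s) R)⁺ ≤ |d| + 1` pairs of heights in the two bands, and by none unless
`d > (r - s) R`. Distinct `x₂` give distinct offsets `x₁ - x₂`, so the whole sum is at most
`R n` times the tail `∑_{d > (r - s) R} F (a, d) (|d| + 1)` of the weighted series; after dividing
by `R` this is `n` times a tail of a convergent series, which tends to `0`.
-/

open Filter Topology

lemma hasSum_ite_Ioc (c : ℝ) (u v : ℤ) :
    HasSum (fun y : ℤ => if u < y ∧ y ≤ v then c else 0) ((v - u).toNat * c) := by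
  convert hasSum_sum_of_ne_finset_zero (L := SummationFilter.unconditional ℤ)
    (s := Finset.Ioc u v) (f := fun y : ℤ => if u < y ∧ y ≤ v then c else 0)
    (fun y hy => if_neg (by simpa using hy)) using 1
  rw [Finset.sum_congr rfl fun y hy => if_pos (Finset.mem_Ioc.1 hy), Finset.sum_const, Int.card_Ioc,
    nsmul_eq_mul]

lemma tsum_tsum_ite_sub_eq (f : ℤ → ℝ) (hf0 : ∀ d, 0 ≤ f d) (u v : ℤ)
    (hf : Summable fun d => ((d - (u - v)).toNat : ℝ) * f d) :
    ∑' y₁ : ℤ, ∑' y₂ : ℤ, (if u < y₁ ∧ y₂ ≤ v then f (y₁ - y₂) else 0)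
      = ∑' d, ((d - (u - v)).toNat : ℝ) * f d := by
  set K : ℤ × ℤ → ℝ := fun p => if u < p.1 ∧ p.2 ≤ v then f (p.1 - p.2) else 0
  let shear : ℤ × ℤ ≃ ℤ × ℤ :=
    ⟨fun p => (p.1 + p.2, p.2), fun p => (p.1 - p.2, p.2), fun p => by simp, fun p => by simp⟩
  have hfiber (d : ℤ) :
      HasSum (fun y => K (shear (d, y))) (((d - (u - v)).toNat : ℝ) * f d) := by
    convert hasSum_ite_Ioc (f d) (u - d) v using 1
    · ext y
      simp only [K, shear, Equiv.coe_fn_mk, add_sub_cancel_right]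
      congr 1
      exact propext ⟨fun h => ⟨by omega, h.2⟩, fun h => ⟨by omega, h.2⟩⟩
    · congr 3; omega
  have hK0 (p : ℤ × ℤ) : 0 ≤ K p := by
    simp only [K]; split_ifs <;> simp [hf0]
  have hsheared : Summable fun p => K (shear p) :=
    (summable_prod_of_nonneg (f := fun p => K (shear p)) fun _ => hK0 _).2
      ⟨fun d => (hfiber d).summable, hf.congr fun d => (hfiber d).tsum_eq.symm⟩
  have hK : Summable K := shear.summable_iff.1 hsheared
  rw [← hK.tsum_prod' hK.prod_factor, ← shear.tsum_eq,
    hsheared.tsum_prod' fun d => (hfiber d).summable]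
  exact tsum_congr fun d => (hfiber d).tsum_eq

lemma toNat_sub_mul_le (d m : ℤ) (hm : 0 ≤ m) {x : ℝ} (hx : 0 ≤ x) :
    ((d - m).toNat : ℝ) * x ≤ if m < d then x * (|(d : ℝ)| + 1) else 0 := by
  split_ifs with hd
  · have : ((d - m).toNat : ℝ) ≤ |(d : ℝ)| + 1 := by
      rw [← Int.cast_abs]
      exact_mod_cast (by have := le_abs_self d; omega : ((d - m).toNat : ℤ) ≤ |d| + 1)
    nlinarith
  · simp [Int.toNat_eq_zero.2 (by omega : d - m ≤ 0)]

lemma summable_ite_lt_mul_abs_add_one {ι : Type*} {f : ι → ℝ} (hf0 : ∀ i, 0 ≤ f i) (φ : ι → ℤ)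
    (hf : Summable fun i => f i * (|(φ i : ℝ)| + 1)) (N : ℤ) :
    Summable fun i => if N < φ i then f i * (|(φ i : ℝ)| + 1) else 0 := by
  have hweighted0 (i : ι) : 0 ≤ f i * (|(φ i : ℝ)| + 1) := mul_nonneg (hf0 i) (by positivity)
  exact hf.of_nonneg_of_le (fun i => by split_ifs; exacts [hweighted0 i, le_rfl])
    fun i => by split_ifs; exacts [le_rfl, hweighted0 i]

lemma tsum_tsum_ite_sub_le (f : ℤ → ℝ) (hf0 : ∀ d, 0 ≤ f d)
    (hf : Summable fun d => f d * (|(d : ℝ)| + 1)) {u v : ℤ} (hvu : v ≤ u) :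
    ∑' y₁ : ℤ, ∑' y₂ : ℤ, (if u < y₁ ∧ y₂ ≤ v then f (y₁ - y₂) else 0)
      ≤ ∑' d, if u - v < d then f d * (|(d : ℝ)| + 1) else 0 := by
  have htail := summable_ite_lt_mul_abs_add_one hf0 id hf (u - v)
  have hle (d : ℤ) := toNat_sub_mul_le d (u - v) (by omega) (hf0 d)
  have hcount := htail.of_nonneg_of_le (fun d => mul_nonneg (by positivity) (hf0 d)) hle
  rw [tsum_tsum_ite_sub_eq f hf0 u v hcount]
  exact hcount.tsum_le_tsum hle htail

lemma sum_range_sum_range_sub_le (g : ℤ → ℝ) (hg0 : ∀ a, 0 ≤ g a) (hg : Summable g) (M : ℕ) :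
    ∑ x₁ ∈ Finset.range M, ∑ x₂ ∈ Finset.range M, g (x₁ - x₂) ≤ M * ∑' a, g a := by
  have hrow (x₁ : ℕ) : ∑ x₂ ∈ Finset.range M, g (x₁ - x₂) ≤ ∑' a, g a := by
    have hinj : Function.Injective fun x₂ : ℕ => (x₁ : ℤ) - x₂ := fun a b h => by
      simpa using h
    calc ∑ x₂ ∈ Finset.range M, g (x₁ - x₂)
        ≤ ∑' x₂ : ℕ, g (x₁ - x₂) :=
          (hg.comp_injective hinj).sum_le_tsum _ fun _ _ => hg0 _
      _ ≤ ∑' a, g a := tsum_comp_le_tsum_of_inj hg hg0 hinj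
  simpa using Finset.sum_le_sum fun x₁ (_ : x₁ ∈ Finset.range M) => hrow x₁

lemma sum_range_sum_range_tsum_tsum_ite_le (F : ℤ × ℤ → ℝ) (hF0 : ∀ p, 0 ≤ F p)
    (hF : Summable fun p : ℤ × ℤ => F p * (|(p.2 : ℝ)| + 1)) {u v : ℤ} (hvu : v ≤ u) (M : ℕ) :
    ∑ x₁ ∈ Finset.range M, ∑ x₂ ∈ Finset.range M, ∑' y₁ : ℤ, ∑' y₂ : ℤ,
        (if u < y₁ ∧ y₂ ≤ v then F ((x₁ : ℤ) - x₂, y₁ - y₂) else 0)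
      ≤ M * ∑' p : ℤ × ℤ, if u - v < p.2 then F p * (|(p.2 : ℝ)| + 1) else 0 := by
  have htail := summable_ite_lt_mul_abs_add_one hF0 Prod.snd hF (u - v)
  rw [htail.tsum_prod]
  refine (Finset.sum_le_sum fun x₁ _ => Finset.sum_le_sum fun x₂ _ =>
    tsum_tsum_ite_sub_le _ (fun d => hF0 _) (hF.prod_factor _) hvu).trans ?_
  refine sum_range_sum_range_sub_le _ (fun a => tsum_nonneg fun d => ?_) htail.prod M
  split_ifs; exacts [mul_nonneg (hF0 _) (by positivity), le_rfl]

lemma tendsto_tsum_ite_lt_atTop {ι : Type*} {g : ι → ℝ} (hg : Summable g) (φ : ι → ℤ) :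
    Tendsto (fun N : ℤ => ∑' i, if N < φ i then g i else 0) atTop (𝓝 0) := by
  have h := tendsto_tsum_of_dominated_convergence (𝓕 := atTop)
    (f := fun (N : ℤ) i => if N < φ i then g i else 0) (g := fun _ => 0)
    (bound := fun i => |g i|) (summable_abs_iff.2 hg) (fun i => ?_)
    (Eventually.of_forall fun N i => ?_)
  · rwa [tsum_zero] at h
  · refine tendsto_const_nhds.congr' ?_
    filter_upwards [eventually_ge_atTop (φ i)] with N hN
    rw [if_neg hN.not_gt]
  · split_ifs <;> simp

theorem opposite_bands_limit_zero_general
    (n : ℕ) (r s : ℤ) (hr : 0 < r) (hs : s < 0)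
    (F : ℤ × ℤ → ℝ) (hF0 : ∀ v, 0 ≤ F v)
    (hF : Summable fun v : ℤ × ℤ => F v * (|(v.2 : ℝ)| + 1)) :
    Tendsto
      (fun R : ℕ =>
        (1 / (R : ℝ)) *
          ∑ x₁ ∈ Finset.range (R * n), ∑ x₂ ∈ Finset.range (R * n),
            ∑' y₁ : ℤ, ∑' y₂ : ℤ,
              if r * (R : ℤ) < y₁ ∧ y₂ ≤ s * (R : ℤ)
              then F ((x₁ : ℤ) - (x₂ : ℤ), y₁ - y₂) else 0)
      atTop (𝓝 0) := by
  have hbound (R : ℕ) (hR : 1 ≤ R) :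
      (1 / (R : ℝ)) * ∑ x₁ ∈ Finset.range (R * n), ∑ x₂ ∈ Finset.range (R * n),
        ∑' y₁ : ℤ, ∑' y₂ : ℤ, (if r * (R : ℤ) < y₁ ∧ y₂ ≤ s * (R : ℤ)
          then F ((x₁ : ℤ) - (x₂ : ℤ), y₁ - y₂) else 0)
      ≤ n * ∑' v : ℤ × ℤ, if r * R - s * R < v.2 then F v * (|(v.2 : ℝ)| + 1) else 0 := by
    refine (mul_le_mul_of_nonneg_left (sum_range_sum_range_tsum_tsum_ite_le F hF0 hF
      (by nlinarith) (R * n)) (by positivity)).trans_eq ?_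
    push_cast; field_simp
  have hgrowth : Tendsto (fun R : ℕ => r * (R : ℤ) - s * R) atTop atTop := by
    simpa only [sub_mul] using
      tendsto_natCast_atTop_atTop.const_mul_atTop' (sub_pos.2 (hs.trans hr))
  have hlim := ((tendsto_tsum_ite_lt_atTop hF Prod.snd).comp hgrowth).const_mul (n : ℝ)
  rw [mul_zero] at hlim
  refine squeeze_zero' (Eventually.of_forall fun R => ?_) (eventually_atTop.2 ⟨1, hbound⟩) hlim
  refine mul_nonneg (by positivity) (Finset.sum_nonneg fun _ _ => Finset.sum_nonneg fun _ _ => ?_)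
  exact tsum_nonneg fun _ => tsum_nonneg fun _ => by split_ifs; exacts [hF0 _, le_rfl]

/-- the contribution of pairs of points in opposite unbounded
horizontal bands vanishes in the normalized limit. -/
theorem opposite_bands_limit_zero
    (n : ℕ) (hn : 1 ≤ n) (r s : ℤ) (hr : 0 < r) (hs : s < 0)
    (F : ℤ × ℤ → ℝ) (hF0 : ∀ v, 0 ≤ F v)
    (hF : Summable fun v : ℤ × ℤ => F v * (|(v.2 : ℝ)| + 1)) :
    Tendsto
      (fun R : ℕ =>
        (1 / (R : ℝ)) *
          ∑ x₁ ∈ Finset.range (R * n), ∑ x₂ ∈ Finset.range (R * n),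
            ∑' y₁ : ℤ, ∑' y₂ : ℤ,
              if r * (R : ℤ) < y₁ ∧ y₂ ≤ s * (R : ℤ)
              then F ((x₁ : ℤ) - (x₂ : ℤ), y₁ - y₂) else 0)
      atTop (𝓝 0) :=
  opposite_bands_limit_zero_general n r s hr hs F hF0 hF
end
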